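/- arXiv:1602.03904 — 7 statements merged into one kernel-verified Lean document; each statement's English description precedes it below -/
import Mathlib

section
/- For every integer r ≥ 3 and every graph G on n vertices the following holds: if G has minimum degree δ(G) > ((3r−7)/(3r−4))·n and G contains no copy of the complete graph K_r, then G is (r−1)-colourable (its chromatic number is at most r−1). -/
theorem stmt_0 {V : Type*} [Fintype V] (r n : ℕ) (hr : 3 ≤ r)
    (G : SimpleGraph V) [DecidableRel G.Adj] (hn : Fintype.card V = n)
    (hdeg : (3 * (r : ℝ) - 7) / (3 * (r : ℝ) - 4) * n < G.minDegree)
    (hfree : G.CliqueFree r) :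
    G.Colorable (r - 1) := by
  obtain ⟨k, rfl⟩ : ∃ k, r = k + 1 := ⟨r - 1, by omega⟩
  refine SimpleGraph.colorable_of_cliqueFree_lt_minDegree hfree ?_
  -- Mathlib's threshold is a truncated ℕ quotient, which the real threshold dominates.
  have floor_le : (((3 * k - 4) * n / (3 * k - 1) : ℕ) : ℝ)
      ≤ (3 * ((k + 1 : ℕ) : ℝ) - 7) / (3 * ((k + 1 : ℕ) : ℝ) - 4) * n := by
    refine Nat.cast_div_le.trans (le_of_eq ?_)
    push_cast [Nat.cast_sub (by omega : 4 ≤ 3 * k), Nat.cast_sub (by omega : 1 ≤ 3 * k)]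
    ring
  rw [hn]
  exact_mod_cast floor_le.trans_lt hdeg
end

section
/- Every triangle-free graph G on n vertices with minimum degree δ(G) > 3n/8 is homomorphic to the cycle C_5 of length 5. -/
/-!
Pass to a maximal triangle-free supergraph `G` of the given graph: its minimum degree `δ` is still
larger than `3n/8`, and any two distinct non-adjacent vertices have a common neighbour. If `G` is
bipartite it maps onto an edge of `C₅`. Otherwise, shortcutting an odd closed walk through common
neighbours yields a pentagon `x₀ … x₄`. Let `Bⱼ = N(xⱼ₋₁) ∩ N(xⱼ₊₁)` and
`J(w) = {j | N(w) meets Bⱼ}`. Since adjacent vertices have disjoint neighbourhoods, two vertices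
with a common neighbour share at least `3δ - n` neighbours, and as `2δ + 2(3δ - n) > n` the sets
`N(p)`, `N(q)` (for `p ~ q`) and two such common neighbourhoods are never pairwise disjoint.
Applied to suitable vertices this forces `J(w) = {p - 1, p + 1}` for some `p`, and
`J(w) ∩ J(w') = ∅` whenever `w ~ w'`; hence `w ↦ p` is a homomorphism to `C₅`.
-/

open Finset SimpleGraph

namespace SimpleGraph

variable {V : Type*} {G : SimpleGraph V}

variable (G) in
def IsPentagon (x : Fin 5 → V) : Prop := ∀ i, G.Adj (x i) (x (i + 1))

lemma IsPentagon.comp_add_left {x : Fin 5 → V} (hx : G.IsPentagon x) (c : Fin 5) :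
    G.IsPentagon fun i ↦ x (c + i) := fun i ↦ by
  simpa only [add_assoc] using hx (c + i)

lemma exists_adj_adj_of_maximal_cliqueFree_three
    (hmax : Maximal (fun H : SimpleGraph V ↦ H.CliqueFree 3) G) {u v : V} (hne : u ≠ v)
    (huv : ¬G.Adj u v) : ∃ z, G.Adj u z ∧ G.Adj v z := by
  classical
  obtain ⟨s, hus, hvs, hu, hv⟩ := exists_of_maximal_cliqueFree_not_adj hmax hne huv
  obtain ⟨z, rfl⟩ := card_eq_one.1 <| by simpa [card_insert_of_notMem hus] using hu.card_eq
  refine ⟨z, isClique_pair.1 ?_ (by simpa using hus), isClique_pair.1 ?_ (by simpa using hvs)⟩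
  · simpa using hu.1
  · simpa using hv.1

lemma exists_isPentagon_of_odd_loop (hmax : Maximal (fun H : SimpleGraph V ↦ H.CliqueFree 3) G)
    {u : V} (w : G.Walk u u) (hw : Odd w.length) :
    ∃ x, G.IsPentagon x := by
  classical
  induction hn : w.length using Nat.strong_induction_on generalizing u w with
  | _ n ih =>
  rcases w with _ | ⟨h₁, _ | ⟨h₂, _ | ⟨h₃, p⟩⟩⟩
  · norm_num at hw
  · exact (h₁.ne rfl).elim
  · norm_num at hw
  rename_i v₁ v₂ v₃
  have hne : u ≠ v₃ := by
    rintro rfl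
    exact hmax.1 {u, v₁, v₂} (is3Clique_triple_iff.2 ⟨h₁, h₃.symm, h₂⟩)
  by_cases hadj : G.Adj u v₃
  · simp only [Walk.length_cons] at hn hw
    refine ih (p.length + 1) (by omega) (p.concat hadj) ?_ (Walk.length_concat ..)
    rw [Walk.length_concat]
    simpa [Nat.odd_add_one] using hw
  · obtain ⟨z, huz, hv₃z⟩ := exists_adj_adj_of_maximal_cliqueFree_three hmax hne hadj
    refine ⟨![u, v₁, v₂, v₃, z], fun i ↦ ?_⟩
    fin_cases i
    exacts [h₁, h₂, h₃, hv₃z, huz.symm]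

lemma Colorable.nonempty_hom_cycleGraph_five (h : G.Colorable 2) :
    Nonempty (G →g cycleGraph 5) :=
  let ι : (⊤ : SimpleGraph (Fin 2)) →g cycleGraph 5 := ⟨Fin.castLE (by norm_num), by decide⟩
  Nonempty.map ι.comp h

section Counting

variable [Fintype V] [DecidableRel G.Adj]

lemma CliqueFree.disjoint_neighborFinset (hG : G.CliqueFree 3) {u v : V} (huv : G.Adj u v) :
    Disjoint (G.neighborFinset u) (G.neighborFinset v) := by
  classical
  refine Finset.disjoint_left.2 fun y hu hv ↦ ?_
  rw [mem_neighborFinset] at hu hv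
  exact hG {u, v, y} (is3Clique_triple_iff.2 ⟨huv, hu, hv⟩)

variable [DecidableEq V]

lemma CliqueFree.three_mul_minDegree_le_card_add (hG : G.CliqueFree 3) {r s z : V}
    (hr : G.Adj r z) (hs : G.Adj s z) :
    3 * G.minDegree ≤ Fintype.card V + #(G.neighborFinset r ∩ G.neighborFinset s) := by
  have hdisj : Disjoint (G.neighborFinset r ∪ G.neighborFinset s) (G.neighborFinset z) :=
    disjoint_union_left.2 ⟨hG.disjoint_neighborFinset hr, hG.disjoint_neighborFinset hs⟩
  have hcard := card_le_univ (G.neighborFinset r ∪ G.neighborFinset s ∪ G.neighborFinset z)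
  rw [card_union_of_disjoint hdisj] at hcard
  have := card_union_add_card_inter (G.neighborFinset r) (G.neighborFinset s)
  have := G.minDegree_le_degree r
  have := G.minDegree_le_degree s
  have := G.minDegree_le_degree z
  simp only [← card_neighborFinset_eq_degree] at *
  omega

lemma CliqueFree.false_of_pairwise_disjoint (hG : G.CliqueFree 3)
    (hδ : 3 * Fintype.card V < 8 * G.minDegree) {p q : V} (hpq : G.Adj p q) {T₁ T₂ : Finset V}
    (hT₁ : 3 * G.minDegree ≤ Fintype.card V + #T₁) (hT₂ : 3 * G.minDegree ≤ Fintype.card V + #T₂)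
    (hp₁ : Disjoint (G.neighborFinset p) T₁) (hp₂ : Disjoint (G.neighborFinset p) T₂)
    (hq₁ : Disjoint (G.neighborFinset q) T₁) (hq₂ : Disjoint (G.neighborFinset q) T₂)
    (h₁₂ : Disjoint T₁ T₂) : False := by
  have hcard := card_le_univ (G.neighborFinset p ∪ G.neighborFinset q ∪ T₁ ∪ T₂)
  rw [card_union_of_disjoint, card_union_of_disjoint, card_union_of_disjoint
    (hG.disjoint_neighborFinset hpq)] at hcard
  · have := G.minDegree_le_degree p
    have := G.minDegree_le_degree q
    simp only [← card_neighborFinset_eq_degree] at *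
    omega
  · exact disjoint_union_left.2 ⟨hp₁, hq₁⟩
  · exact disjoint_union_left.2 ⟨disjoint_union_left.2 ⟨hp₂, hq₂⟩, h₁₂⟩

end Counting

lemma cycleGraph_five_adj_of_disjoint_neighborFinset {p q : Fin 5}
    (h : Disjoint ((cycleGraph 5).neighborFinset p) ((cycleGraph 5).neighborFinset q)) :
    (cycleGraph 5).Adj p q := by
  revert p q
  decide

lemma exists_eq_cycleGraph_five_neighborFinset (s : Finset (Fin 5))
    (hwindow : ∀ c, c ∈ s ∨ c + 1 ∈ s ∨ c + 2 ∈ s) (hgap : ∀ c, c ∈ s → c + 2 ∈ s → c + 3 ∉ s)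
    (hnext : ∀ c, c ∈ s → c + 2 ∈ s ∨ c + 3 ∈ s) :
    ∃ p, s = (cycleGraph 5).neighborFinset p := by
  revert s
  decide

section Pentagon

variable [Fintype V] [DecidableRel G.Adj] {x : Fin 5 → V}

variable (G) in
/-- `j ∈ G.neighborClasses x w` iff `w` has a neighbour in `Bⱼ = N(x (j - 1)) ∩ N(x (j + 1))`. -/
def neighborClasses (x : Fin 5 → V) (w : V) : Finset (Fin 5) :=
  {j | ∃ a, G.Adj w a ∧ G.Adj (x (j - 1)) a ∧ G.Adj (x (j + 1)) a}

lemma mem_neighborClasses {w : V} {j : Fin 5} :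
    j ∈ G.neighborClasses x w ↔ ∃ a, G.Adj w a ∧ G.Adj (x (j - 1)) a ∧ G.Adj (x (j + 1)) a := by
  simp [neighborClasses]

@[simp]
lemma mem_neighborClasses_comp_add_left {w : V} {c j : Fin 5} :
    j ∈ G.neighborClasses (fun i ↦ x (c + i)) w ↔ c + j ∈ G.neighborClasses x w := by
  simp only [mem_neighborClasses, add_sub_assoc, add_assoc]

lemma mem_neighborClasses_of_adj (hx : G.IsPentagon x) {w : V} {j : Fin 5}
    (h : G.Adj w (x j)) : j ∈ G.neighborClasses x w :=
  mem_neighborClasses.2 ⟨x j, h, by simpa using hx (j - 1), (hx j).symm⟩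

lemma exists_adj_adj_of_notMem_neighborClasses
    (hmax : Maximal (fun H : SimpleGraph V ↦ H.CliqueFree 3) G) (hx : G.IsPentagon x)
    {w : V} {j : Fin 5} (hj : j ∉ G.neighborClasses x w) (hj' : j + 1 ∉ G.neighborClasses x w) :
    (∃ z, G.Adj w z ∧ G.Adj (x j) z) ∧ ∃ z, G.Adj w z ∧ G.Adj (x (j + 1)) z := by
  have hne : w ≠ x j := by
    rintro rfl
    exact hj' (mem_neighborClasses_of_adj hx (hx j))
  have hne' : w ≠ x (j + 1) := by
    rintro rfl
    exact hj (mem_neighborClasses_of_adj hx (hx j).symm)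
  exact ⟨exists_adj_adj_of_maximal_cliqueFree_three hmax hne
      fun h ↦ hj (mem_neighborClasses_of_adj hx h),
    exists_adj_adj_of_maximal_cliqueFree_three hmax hne'
      fun h ↦ hj' (mem_neighborClasses_of_adj hx h)⟩

variable [DecidableEq V]

/- Stated at index `0`, where pentagon indices are numerals (`x (0 - 1)` is `x 4` by `rfl`);
rotating the pentagon with `IsPentagon.comp_add_left` yields them at every index. -/

lemma zero_mem_or_one_mem_or_two_mem_neighborClasses
    (hmax : Maximal (fun H : SimpleGraph V ↦ H.CliqueFree 3) G)
    (hδ : 3 * Fintype.card V < 8 * G.minDegree) (hx : G.IsPentagon x) (w : V) :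
    0 ∈ G.neighborClasses x w ∨ 1 ∈ G.neighborClasses x w ∨ 2 ∈ G.neighborClasses x w := by
  by_contra! ⟨h₀, h₁, h₂⟩
  obtain ⟨⟨z₀, hwz₀, hx₀z₀⟩, z₁, hwz₁, hx₁z₁⟩ :=
    exists_adj_adj_of_notMem_neighborClasses hmax hx h₀ h₁
  obtain ⟨-, z₂, hwz₂, hx₂z₂ : G.Adj (x 2) z₂⟩ :=
    exists_adj_adj_of_notMem_neighborClasses hmax hx h₁ h₂
  have hG := hmax.1
  refine hG.false_of_pairwise_disjoint hδ hx₁z₁.symm (hG.three_mul_minDegree_le_card_add hwz₀ hx₀z₀)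
    (hG.three_mul_minDegree_le_card_add hwz₂ hx₂z₂)
    ((hG.disjoint_neighborFinset hwz₁.symm).mono_right inter_subset_left)
    ((hG.disjoint_neighborFinset hwz₁.symm).mono_right inter_subset_left)
    ((hG.disjoint_neighborFinset (hx 0).symm).mono_right inter_subset_right)
    ((hG.disjoint_neighborFinset (hx 1)).mono_right inter_subset_right) ?_
  refine Finset.disjoint_left.2 fun y hy hy' ↦ h₁ (mem_neighborClasses.2 ?_)
  simp only [mem_inter, mem_neighborFinset] at hy hy'
  exact ⟨y, hy.1, hy.2, hy'.2⟩

lemma three_notMem_neighborClasses (hG : G.CliqueFree 3)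
    (hδ : 3 * Fintype.card V < 8 * G.minDegree) (hx : G.IsPentagon x) {w : V}
    (h₀ : 0 ∈ G.neighborClasses x w) (h₂ : 2 ∈ G.neighborClasses x w) :
    3 ∉ G.neighborClasses x w := by
  intro h₃
  obtain ⟨a, hwa, hx₄a : G.Adj (x 4) a, hx₁a : G.Adj (x 1) a⟩ := mem_neighborClasses.1 h₀
  obtain ⟨d, hwd, -, hx₃d : G.Adj (x 3) d⟩ := mem_neighborClasses.1 h₂
  obtain ⟨g, hwg, hx₂g : G.Adj (x 2) g, hx₄g : G.Adj (x 4) g⟩ := mem_neighborClasses.1 h₃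
  exact hG.false_of_pairwise_disjoint hδ hwa
    (hG.three_mul_minDegree_le_card_add hx₃d.symm (hx 3).symm)
    (hG.three_mul_minDegree_le_card_add hx₂g.symm (hx 1))
    ((hG.disjoint_neighborFinset hwd).mono_right inter_subset_left)
    ((hG.disjoint_neighborFinset hwg).mono_right inter_subset_left)
    ((hG.disjoint_neighborFinset hx₄a.symm).mono_right inter_subset_right)
    ((hG.disjoint_neighborFinset hx₁a.symm).mono_right inter_subset_right)
    ((hG.disjoint_neighborFinset hx₄g).mono inter_subset_right inter_subset_left)

lemma two_mem_or_three_mem_neighborClasses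
    (hmax : Maximal (fun H : SimpleGraph V ↦ H.CliqueFree 3) G)
    (hδ : 3 * Fintype.card V < 8 * G.minDegree) (hx : G.IsPentagon x) {w : V}
    (h₀ : 0 ∈ G.neighborClasses x w) :
    2 ∈ G.neighborClasses x w ∨ 3 ∈ G.neighborClasses x w := by
  by_contra! ⟨h₂, h₃⟩
  obtain ⟨a, hwa, -, hx₁a : G.Adj (x 1) a⟩ := mem_neighborClasses.1 h₀
  obtain ⟨⟨z₂, hwz₂, hx₂z₂⟩, z₃, hwz₃, hx₃z₃ : G.Adj (x 3) z₃⟩ :=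
    exists_adj_adj_of_notMem_neighborClasses hmax hx h₂ h₃
  have hG := hmax.1
  refine hG.false_of_pairwise_disjoint hδ hx₁a.symm (hG.three_mul_minDegree_le_card_add hwz₃ hx₃z₃)
    (hG.three_mul_minDegree_le_card_add hwz₂ hx₂z₂)
    ((hG.disjoint_neighborFinset hwa.symm).mono_right inter_subset_left)
    ((hG.disjoint_neighborFinset hwa.symm).mono_right inter_subset_left) ?_
    ((hG.disjoint_neighborFinset (hx 1)).mono_right inter_subset_right)
    ((hG.disjoint_neighborFinset (hx 2)).symm.mono inter_subset_right inter_subset_right)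
  refine Finset.disjoint_left.2 fun y hy hy' ↦ h₂ (mem_neighborClasses.2 ?_)
  simp only [mem_inter, mem_neighborFinset] at hy hy'
  exact ⟨y, hy'.1, hy, hy'.2⟩

lemma zero_notMem_neighborClasses_of_adj (hG : G.CliqueFree 3)
    (hδ : 3 * Fintype.card V < 8 * G.minDegree) (hx : G.IsPentagon x) {w w' : V}
    (hww' : G.Adj w w') (h : 0 ∈ G.neighborClasses x w) : 0 ∉ G.neighborClasses x w' := by
  intro h'
  obtain ⟨a, hwa, hx₄a : G.Adj (x 4) a, hx₁a : G.Adj (x 1) a⟩ := mem_neighborClasses.1 h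
  obtain ⟨a', hwa', hx₄a' : G.Adj (x 4) a', hx₁a' : G.Adj (x 1) a'⟩ := mem_neighborClasses.1 h'
  exact hG.false_of_pairwise_disjoint hδ hx₁a.symm
    (hG.three_mul_minDegree_le_card_add hww' hwa'.symm)
    (hG.three_mul_minDegree_le_card_add (hx 3).symm (hx 2))
    ((hG.disjoint_neighborFinset hwa.symm).mono_right inter_subset_left)
    ((hG.disjoint_neighborFinset hx₄a.symm).mono_right inter_subset_left)
    ((hG.disjoint_neighborFinset hx₁a').mono_right inter_subset_right)
    ((hG.disjoint_neighborFinset (hx 1)).mono_right inter_subset_right)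
    ((hG.disjoint_neighborFinset hx₄a').symm.mono inter_subset_right inter_subset_left)

lemma exists_neighborClasses_eq_neighborFinset
    (hmax : Maximal (fun H : SimpleGraph V ↦ H.CliqueFree 3) G)
    (hδ : 3 * Fintype.card V < 8 * G.minDegree) (hx : G.IsPentagon x) (w : V) :
    ∃ p, G.neighborClasses x w = (cycleGraph 5).neighborFinset p := by
  refine exists_eq_cycleGraph_five_neighborFinset _ (fun c ↦ ?_) (fun c hc hc₂ ↦ ?_) (fun c hc ↦ ?_)
  · simpa using
      zero_mem_or_one_mem_or_two_mem_neighborClasses hmax hδ (hx.comp_add_left c) w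
  · simpa using three_notMem_neighborClasses hmax.1 hδ (hx.comp_add_left c) (w := w)
      (by simpa using hc) (by simpa using hc₂)
  · simpa using two_mem_or_three_mem_neighborClasses hmax hδ (hx.comp_add_left c) (w := w)
      (by simpa using hc)

lemma disjoint_neighborClasses_of_adj (hG : G.CliqueFree 3)
    (hδ : 3 * Fintype.card V < 8 * G.minDegree) (hx : G.IsPentagon x) {w w' : V}
    (hww' : G.Adj w w') : Disjoint (G.neighborClasses x w) (G.neighborClasses x w') := by
  refine Finset.disjoint_left.2 fun c hc hc' ↦ ?_
  refine zero_notMem_neighborClasses_of_adj hG hδ (hx.comp_add_left c) hww' ?_ ?_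
  · simpa using hc
  · simpa using hc'

theorem nonempty_hom_cycleGraph_five_of_pentagon
    (hmax : Maximal (fun H : SimpleGraph V ↦ H.CliqueFree 3) G)
    (hδ : 3 * Fintype.card V < 8 * G.minDegree) (hx : G.IsPentagon x) :
    Nonempty (G →g cycleGraph 5) := by
  choose f hf using exists_neighborClasses_eq_neighborFinset hmax hδ hx
  refine ⟨⟨f, fun {u v} huv ↦ cycleGraph_five_adj_of_disjoint_neighborFinset ?_⟩⟩
  rw [← hf, ← hf]
  exact disjoint_neighborClasses_of_adj hmax.1 hδ hx huv

end Pentagon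

theorem nonempty_hom_cycleGraph_five_of_maximal_cliqueFree_three
    [Fintype V] [DecidableEq V] [DecidableRel G.Adj]
    (hmax : Maximal (fun H : SimpleGraph V ↦ H.CliqueFree 3) G)
    (hδ : 3 * Fintype.card V < 8 * G.minDegree) : Nonempty (G →g cycleGraph 5) := by
  by_cases hbip : G.Colorable 2
  · exact hbip.nonempty_hom_cycleGraph_five
  obtain ⟨u, w, hw⟩ : ∃ u, ∃ w : G.Walk u u, Odd w.length := by
    simpa [two_colorable_iff_forall_loop_even] using hbip
  obtain ⟨x, hx⟩ := exists_isPentagon_of_odd_loop hmax w hw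
  exact nonempty_hom_cycleGraph_five_of_pentagon hmax hδ hx

end SimpleGraph

theorem stmt_3 {V : Type*} [Fintype V] (n : ℕ)
    (G : SimpleGraph V) [DecidableRel G.Adj] (hn : Fintype.card V = n)
    (htri : ∀ (v : V) (c : G.Walk v v), c.IsCycle → c.length ≠ 3)
    (hdeg : 3 * (n : ℝ) / 8 < G.minDegree) :
    Nonempty (G →g SimpleGraph.cycleGraph 5) := by
  classical
  have hG : G.CliqueFree 3 := fun s hs ↦ by
    obtain ⟨u, w, hw, hlen⟩ := is3Clique_iff_exists_cycle_length_three.1 ⟨s, hs⟩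
    exact htri u w hw hlen
  have hδ : 3 * Fintype.card V < 8 * G.minDegree := by
    rw [hn]
    exact_mod_cast (by linarith : (3 * n : ℝ) < 8 * G.minDegree)
  obtain ⟨H, hGH, hmax⟩ := Finite.exists_le_maximal (p := fun H : SimpleGraph V ↦ H.CliqueFree 3) hG
  obtain ⟨φ⟩ := nonempty_hom_cycleGraph_five_of_maximal_cliqueFree_three hmax
    (hδ.trans_le (Nat.mul_le_mul_left 8 (minDegree_le_minDegree hGH)))
  exact ⟨φ.comp (Hom.ofLE hGH)⟩
end

section
/- Let Φ denote the graph obtained from the cycle C_6 of length 6 by adding exactly one diagonal (a chord joining two vertices at distance 3 on the cycle). For all integers k ≥ 2 and n, and for every graph G ∈ 𝒢_{n,k}, the graph G does not contain an induced copy of Φ. -/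
/-- The graph `Φ` obtained from the cycle `C₆` by adding exactly one diagonal,
namely the chord joining the antipodal vertices `1` and `4`. -/
def Phi : SimpleGraph (Fin 6) :=
  SimpleGraph.fromEdgeSet {s(0, 1), s(1, 2), s(2, 3), s(3, 4), s(4, 5), s(5, 0), s(1, 4)}

/-!
Let `a b c d e g` be the image of `Φ`: the hexagon `abcdeg` with the chord `be`. Edge-maximality
at the non-edges `ad` and `cg` gives walks `P : a → d` and `Q : c → g` of even length at most
`2k - 2`, and closing them up by `abcd` resp. `cbag` forces length exactly `2k - 2`. Comparing
odd closed walks with the odd girth `2k + 1` then shows that `P` and `Q` are disjoint paths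
avoiding `b` and `e`, and that every vertex has at most three neighbours among the `4k` vertices
of `P`, `Q`, `b`, `e`. Double counting the edges leaving this set gives `4k · δ(G) ≤ 3n`.
-/

open Finset SimpleGraph

lemma Finset.card_le_two_of_forall_lt_imp_eq_add_two {s : Finset ℕ}
    (h : ∀ i ∈ s, ∀ j ∈ s, i < j → j = i + 2) : #s ≤ 2 := by
  by_contra! hs
  obtain ⟨i, hi, j, hj, l, hl, hij, hil, hjl⟩ := two_lt_card.mp hs
  have := h i hi j hj; have := h j hj i hi; have := h i hi l hl
  have := h l hl i hi; have := h j hj l hl; have := h l hl j hj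
  omega

lemma Finset.exists_mem_add_two_mem_of_one_lt_card {s : Finset ℕ}
    (h : ∀ i ∈ s, ∀ j ∈ s, i < j → j = i + 2) (hs : 1 < #s) : ∃ i ∈ s, i + 2 ∈ s := by
  obtain ⟨i, hi, j, hj, hij⟩ := one_lt_card.mp hs
  rcases lt_or_gt_of_ne hij with hlt | hlt
  · exact ⟨i, hi, h i hi j hj hlt ▸ hj⟩
  · exact ⟨j, hj, h j hj i hi hlt ▸ hi⟩

namespace SimpleGraph

variable {V : Type*} {G : SimpleGraph V}

def HasWalk (G : SimpleGraph V) (u v : V) (n : ℕ) : Prop := ∃ p : G.Walk u v, p.length = n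

lemma Adj.hasWalk {u v : V} (h : G.Adj u v) : G.HasWalk u v 1 := ⟨h.toWalk, rfl⟩

namespace HasWalk

variable {u v w : V} {m n : ℕ}

lemma trans (h₁ : G.HasWalk u v m) (h₂ : G.HasWalk v w n) : G.HasWalk u w (m + n) := by
  obtain ⟨p, rfl⟩ := h₁
  obtain ⟨q, rfl⟩ := h₂
  exact ⟨p.append q, Walk.length_append p q⟩

lemma symm (h : G.HasWalk u v m) : G.HasWalk v u m := by
  obtain ⟨p, rfl⟩ := h
  exact ⟨p.reverse, p.length_reverse⟩

end HasWalk

namespace Walk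

variable {u v : V} (p : G.Walk u v)

lemma hasWalk_getVert {i j : ℕ} (hij : i ≤ j) (hj : j ≤ p.length) :
    G.HasWalk (p.getVert i) (p.getVert j) (j - i) := by
  induction j, hij using Nat.le_induction with
  | base => exact ⟨nil, by simp⟩
  | succ j hij ih =>
    have h := (ih (by omega)).trans (p.adj_getVert_succ (by omega)).hasWalk
    rwa [show j - i + 1 = j + 1 - i by omega] at h

lemma hasWalk_start_getVert {i : ℕ} (hi : i ≤ p.length) : G.HasWalk u (p.getVert i) i := by
  simpa using p.hasWalk_getVert (Nat.zero_le i) hi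

lemma hasWalk_getVert_end {i : ℕ} (hi : i ≤ p.length) :
    G.HasWalk (p.getVert i) v (p.length - i) := by
  simpa using p.hasWalk_getVert hi le_rfl

def neighborIndices [DecidableRel G.Adj] (w : V) : Finset ℕ :=
  {i ∈ range (p.length + 1) | G.Adj w (p.getVert i)}

lemma mem_neighborIndices [DecidableRel G.Adj] {w : V} {i : ℕ} :
    i ∈ p.neighborIndices w ↔ i ≤ p.length ∧ G.Adj w (p.getVert i) := by
  simp [neighborIndices]

lemma card_filter_adj_support_le [DecidableRel G.Adj] [DecidableEq V] (w : V) :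
    #({x ∈ p.support.toFinset | G.Adj w x}) ≤ #(p.neighborIndices w) := by
  refine card_le_card_of_surjOn p.getVert fun x hx => ?_
  simp only [coe_filter, List.mem_toFinset, Set.mem_ofPred_eq,
    Walk.mem_support_iff_exists_getVert] at hx
  obtain ⟨⟨i, rfl, hi⟩, hx⟩ := hx
  exact ⟨i, p.mem_neighborIndices.mpr ⟨hi, hx⟩, rfl⟩

end Walk

/-- Odd girth at least `g`, stated for closed walks; `oddGirthAtLeast_of_isCycle` shows that
cycles suffice. -/
def OddGirthAtLeast (G : SimpleGraph V) (g : ℕ) : Prop :=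
  ∀ ⦃v : V⦄ ⦃m : ℕ⦄, G.HasWalk v v m → Odd m → g ≤ m

lemma OddGirthAtLeast.mod_two_eq_zero_or_le {g m : ℕ} {v : V} (hG : G.OddGirthAtLeast g)
    (h : G.HasWalk v v m) : m % 2 = 0 ∨ g ≤ m := by
  rcases Nat.mod_two_eq_zero_or_one m with hm | hm
  · exact .inl hm
  · exact .inr (hG h (Nat.odd_iff.mpr hm))

/-- A shortest odd closed walk is a cycle: a repeated vertex splits it into two shorter closed
walks, one of which is odd. -/
lemma oddGirthAtLeast_of_isCycle {g : ℕ}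
    (h : ∀ (v : V) (c : G.Walk v v), c.IsCycle → Odd c.length → g ≤ c.length) :
    G.OddGirthAtLeast g := by
  intro v m hw hm
  induction m using Nat.strong_induction_on generalizing v with
  | _ m ih =>
  obtain ⟨w, rfl⟩ := hw
  cases w with
  | nil => simp at hm
  | @cons _ y _ hadj p =>
    by_cases hp : p.IsPath
    · refine h _ _ (Walk.isCycle_iff_isPath_tail_and_le_length.mpr ⟨by simpa using hp, ?_⟩) hm
      have : p.length ≠ 0 := fun h0 => hadj.ne (p.eq_of_length_eq_zero h0).symm
      rcases hm with ⟨r, hr⟩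
      simp only [Walk.length_cons] at hr ⊢
      omega
    · obtain ⟨i, hi, j, hj, hij, hne⟩ : ∃ i ≤ p.length, ∃ j ≤ p.length,
          p.getVert i = p.getVert j ∧ i < j := by
        rw [← Walk.IsPath.getVert_injOn_iff] at hp
        simp only [Set.InjOn, Set.mem_ofPred_eq, not_forall] at hp
        obtain ⟨i, hi, j, hj, hij, hne⟩ := hp
        rcases lt_or_gt_of_ne hne with h | h
        · exact ⟨i, hi, j, hj, hij, h⟩
        · exact ⟨j, hj, i, hi, hij.symm, h⟩
      have hloop : G.HasWalk (p.getVert j) (p.getVert j) (j - i) :=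
        hij ▸ p.hasWalk_getVert hne.le hj
      have hrest : G.HasWalk v v (1 + i + (p.length - j)) :=
        ((hadj.hasWalk.trans (p.hasWalk_start_getVert hi)).trans
          (hij ▸ p.hasWalk_getVert_end hj))
      rw [Walk.length_cons, Nat.odd_iff] at hm
      rw [Walk.length_cons]
      have := fun hodd => ih _ (by rw [Walk.length_cons]; omega) hloop (Nat.odd_iff.mpr hodd)
      have := fun hodd => ih _ (by rw [Walk.length_cons]; omega) hrest (Nat.odd_iff.mpr hodd)
      omega

namespace Walk

lemma exists_edges_eq_append_cons {e : Sym2 V} :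
    ∀ {x y : V} (p : G.Walk x y), e ∈ p.edges →
      ∃ (u v : V) (q : G.Walk x u) (r : G.Walk v y),
        s(u, v) = e ∧ p.edges = q.edges ++ e :: r.edges
  | _, _, nil, he => by simp at he
  | x, _, cons (v := y) hadj p, he => by
    by_cases hxy : e = s(x, y)
    · exact ⟨x, y, nil, p, hxy.symm, by simp [hxy]⟩
    · rw [edges_cons, List.mem_cons] at he
      obtain ⟨u, v, q, r, huv, hp⟩ := p.exists_edges_eq_append_cons (he.resolve_left hxy)
      exact ⟨u, v, cons hadj q, r, huv, by simp [hp]⟩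

lemma hasWalk_of_notMem_edges {e : Sym2 V} {x y : V} (p : (G ⊔ fromEdgeSet {e}).Walk x y)
    (he : e ∉ p.edges) : G.HasWalk x y p.length := by
  refine ⟨p.transfer G fun e' he' => ?_, p.length_transfer _⟩
  have h := p.edges_subset_edgeSet he'
  rw [edgeSet_sup, edgeSet_fromEdgeSet] at h
  rcases h with h | ⟨rfl, -⟩
  · exact h
  · exact absurd he' he

lemma IsTrail.hasWalk_of_mem_edges {u v z : V} {c : (G ⊔ fromEdgeSet {s(u, v)}).Walk z z}
    (hc : c.IsTrail) (he : s(u, v) ∈ c.edges) : G.HasWalk u v (c.length - 1) := by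
  obtain ⟨x, y, q, r, hxy, hqr⟩ := c.exists_edges_eq_append_cons he
  have hlen : c.length = q.length + 1 + r.length := by
    rw [← c.length_edges, hqr]
    simp only [List.length_append, List.length_cons, length_edges]
    omega
  have hnd := hc.edges_nodup
  rw [hqr, List.nodup_middle, List.nodup_cons, List.mem_append] at hnd
  obtain ⟨w, hw⟩ := (r.append q).hasWalk_of_notMem_edges (by
    rw [edges_append, List.mem_append]
    exact fun h => hnd.1 h.symm)
  have hyx : G.HasWalk y x (c.length - 1) := ⟨w, by rw [hw, length_append]; omega⟩
  rcases Sym2.eq_iff.mp hxy with ⟨rfl, rfl⟩ | ⟨rfl, rfl⟩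
  · exact hyx.symm
  · exact hyx

end Walk

lemma exists_walk_of_exists_isCycle_sup {k : ℕ} (hG : G.OddGirthAtLeast (2 * k + 1)) {a d : V}
    (had : G.HasWalk a d 3)
    (h : ∃ (z : V) (c : (G ⊔ fromEdgeSet {s(a, d)}).Walk z z),
      c.IsCycle ∧ Odd c.length ∧ c.length ≤ 2 * k - 1) :
    ∃ P : G.Walk a d, P.length + 2 = 2 * k := by
  obtain ⟨z, c, hc, hodd, hle⟩ := h
  rw [Nat.odd_iff] at hodd
  by_cases he : s(a, d) ∈ c.edges
  · obtain ⟨P, hP⟩ := hc.isTrail.hasWalk_of_mem_edges he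
    have := hG.mod_two_eq_zero_or_le (HasWalk.trans ⟨P, hP⟩ had.symm)
    exact ⟨P, by omega⟩
  · have := hG.mod_two_eq_zero_or_le (c.hasWalk_of_notMem_edges he)
    omega

section OddCycleThroughPath

/- `P` followed by any walk of length 3 from `d` back to `a` is an odd closed walk of the least
possible length `2k + 1`, so every shortcut yields a shorter odd closed walk. -/
variable {k : ℕ} (hG : G.OddGirthAtLeast (2 * k + 1)) {a d : V} {P : G.Walk a d}
  (hP : P.length + 2 = 2 * k)
include hG hP

lemma getVert_ne_of_hasWalk {x : V} {s t i : ℕ} (hxa : G.HasWalk x a s) (hxd : G.HasWalk x d t)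
    (hs : 0 < s) (ht : 0 < t) (hst : s + t = 3) (hi : i ≤ P.length) : P.getVert i ≠ x := by
  rintro rfl
  have h₁ := hG.mod_two_eq_zero_or_le ((P.hasWalk_start_getVert hi).trans hxa)
  have h₂ := hG.mod_two_eq_zero_or_le ((P.hasWalk_getVert_end hi).trans hxd.symm)
  omega

lemma add_eq_two_or_eq_length_add_one {x v : V} {s t i : ℕ} (hxa : G.HasWalk x a s)
    (hxd : G.HasWalk x d t) (hs : 0 < s) (ht : 0 < t) (hst : s + t = 3) (hvx : G.Adj v x)
    (hvi : G.Adj v (P.getVert i)) (hi : i ≤ P.length) : i + s = 2 ∨ i + s = P.length + 1 := by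
  have h₁ := hG.mod_two_eq_zero_or_le
    (((hvx.hasWalk.trans hxa).trans (P.hasWalk_start_getVert hi)).trans hvi.symm.hasWalk)
  have h₂ := hG.mod_two_eq_zero_or_le
    (((hvx.hasWalk.trans hxd).trans (P.hasWalk_getVert_end hi).symm).trans hvi.symm.hasWalk)
  omega

variable (had : G.HasWalk a d 3)
include had

lemma isPath_of_oddGirthAtLeast : P.IsPath := by
  rw [← Walk.IsPath.getVert_injOn_iff]
  suffices ∀ i j, i < j → j ≤ P.length → P.getVert i ≠ P.getVert j by
    intro i hi j hj hij
    by_contra hne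
    rcases lt_or_gt_of_ne hne with h | h
    · exact this i j h hj hij
    · exact this j i h hi hij.symm
  intro i j hij hj heq
  have h₁ := hG.mod_two_eq_zero_or_le (heq ▸ P.hasWalk_getVert hij.le hj)
  have h₂ := hG.mod_two_eq_zero_or_le
    (((P.hasWalk_start_getVert (hij.le.trans hj)).trans (heq ▸ P.hasWalk_getVert_end hj)).trans
      had.symm)
  omega

lemma eq_add_two_of_adj_getVert {v : V} {i j : ℕ} (hij : i < j) (hj : j ≤ P.length)
    (hvi : G.Adj v (P.getVert i)) (hvj : G.Adj v (P.getVert j)) : j = i + 2 := by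
  have h₁ := hG.mod_two_eq_zero_or_le
    ((hvi.hasWalk.trans (P.hasWalk_getVert hij.le hj)).trans hvj.symm.hasWalk)
  have h₂ := hG.mod_two_eq_zero_or_le
    ((((hvi.hasWalk.trans (P.hasWalk_start_getVert (hij.le.trans hj)).symm).trans had).trans
      (P.hasWalk_getVert_end hj).symm).trans hvj.symm.hasWalk)
  omega

variable [DecidableRel G.Adj] (v : V)

lemma eq_add_two_of_mem_neighborIndices :
    ∀ i ∈ P.neighborIndices v, ∀ j ∈ P.neighborIndices v, i < j → j = i + 2 := by
  intro i hi j hj hij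
  rw [Walk.mem_neighborIndices] at hi hj
  exact eq_add_two_of_adj_getVert hG hP had hij hj.1 hi.2 hj.2

lemma card_neighborIndices_le_two : #(P.neighborIndices v) ≤ 2 :=
  card_le_two_of_forall_lt_imp_eq_add_two (eq_add_two_of_mem_neighborIndices hG hP had v)

lemma card_neighborIndices_le_one {x : V} {s t : ℕ} (hxa : G.HasWalk x a s)
    (hxd : G.HasWalk x d t) (hs : 0 < s) (ht : 0 < t) (hst : s + t = 3) (hvx : G.Adj v x) :
    #(P.neighborIndices v) ≤ 1 := by
  refine card_le_one.mpr fun i hi j hj => ?_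
  have hgap := eq_add_two_of_mem_neighborIndices hG hP had v
  have hij := hgap i hi j hj
  have hji := hgap j hj i hi
  rw [Walk.mem_neighborIndices] at hi hj
  have hi' := add_eq_two_or_eq_length_add_one hG hP hxa hxd hs ht hst hvx hi.2 hi.1
  have hj' := add_eq_two_or_eq_length_add_one hG hP hxa hxd hs ht hst hvx hj.2 hj.1
  omega

lemma exists_adj_getVert_add_two (h : 1 < #(P.neighborIndices v)) :
    ∃ i, i + 2 ≤ P.length ∧ G.Adj v (P.getVert i) ∧ G.Adj v (P.getVert (i + 2)) := by
  obtain ⟨i, hi, hi'⟩ :=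
    exists_mem_add_two_mem_of_one_lt_card (eq_add_two_of_mem_neighborIndices hG hP had v) h
  rw [Walk.mem_neighborIndices] at hi hi'
  exact ⟨i, hi'.1, hi.2, hi'.2⟩

end OddCycleThroughPath

structure ChordedHexagon (G : SimpleGraph V) (a b c d e g : V) : Prop where
  ab : G.Adj a b
  bc : G.Adj b c
  cd : G.Adj c d
  de : G.Adj d e
  eg : G.Adj e g
  ga : G.Adj g a
  be : G.Adj b e

namespace ChordedHexagon

lemma of_hom (φ : Phi →g G) : G.ChordedHexagon (φ 0) (φ 1) (φ 2) (φ 3) (φ 4) (φ 5) := by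
  constructor <;> exact φ.map_adj (by simp [Phi])

variable {a b c d e g : V} (H : G.ChordedHexagon a b c d e g)
include H

lemma swap : G.ChordedHexagon c b a g e d :=
  ⟨H.bc.symm, H.ab.symm, H.ga.symm, H.eg.symm, H.de.symm, H.cd.symm, H.be⟩

lemma hasWalk_three : G.HasWalk a d 3 := (H.ab.hasWalk.trans H.bc.hasWalk).trans H.cd.hasWalk

variable {k : ℕ} (hG : G.OddGirthAtLeast (2 * k + 1)) {P : G.Walk a d}
  (hP : P.length + 2 = 2 * k)
include hG hP

lemma notMem_support_b : b ∉ P.support := by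
  rw [Walk.mem_support_iff_exists_getVert]
  rintro ⟨i, hi, hil⟩
  exact getVert_ne_of_hasWalk hG hP H.ab.symm.hasWalk (H.bc.hasWalk.trans H.cd.hasWalk)
    one_pos two_pos rfl hil hi

lemma notMem_support_e : e ∉ P.support := by
  rw [Walk.mem_support_iff_exists_getVert]
  rintro ⟨i, hi, hil⟩
  exact getVert_ne_of_hasWalk hG hP (H.be.symm.hasWalk.trans H.ab.symm.hasWalk) H.de.symm.hasWalk
    two_pos one_pos rfl hil hi

section

variable [DecidableRel G.Adj] {v : V}

lemma card_neighborIndices_le_one_of_adj_b (hvb : G.Adj v b) : #(P.neighborIndices v) ≤ 1 :=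
  card_neighborIndices_le_one hG hP H.hasWalk_three v H.ab.symm.hasWalk
    (H.bc.hasWalk.trans H.cd.hasWalk) one_pos two_pos rfl hvb

lemma card_neighborIndices_le_one_of_adj_e (hve : G.Adj v e) : #(P.neighborIndices v) ≤ 1 :=
  card_neighborIndices_le_one hG hP H.hasWalk_three v
    (H.be.symm.hasWalk.trans H.ab.symm.hasWalk) H.de.symm.hasWalk two_pos one_pos rfl hve

end

section TwoPaths

variable {Q : G.Walk c g} (hQ : Q.length + 2 = 2 * k)
include hQ

lemma not_adj_getVert_add_two {v : V} {i j : ℕ} (hi : i + 2 ≤ P.length) (hj : j + 2 ≤ Q.length)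
    (hPi : G.Adj v (P.getVert i)) (hPi' : G.Adj v (P.getVert (i + 2)))
    (hQj : G.Adj v (Q.getVert j)) : ¬ G.Adj v (Q.getVert (j + 2)) := by
  intro hQj'
  have hPa := (P.hasWalk_start_getVert (i := i) (by omega)).symm
  have hPd := P.hasWalk_getVert_end (i := i + 2) hi
  have hQc := Q.hasWalk_start_getVert (i := j) (by omega)
  have hQg := (Q.hasWalk_getVert_end (i := j + 2) hj).symm
  have h₁ := hG.mod_two_eq_zero_or_le
    ((((hPi'.hasWalk.trans hPd).trans H.cd.symm.hasWalk).trans hQc).trans hQj.symm.hasWalk)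
  have h₂ := hG.mod_two_eq_zero_or_le
    ((((hPi.hasWalk.trans hPa).trans H.ga.symm.hasWalk).trans hQg).trans hQj'.symm.hasWalk)
  have h₃ := hG.mod_two_eq_zero_or_le
    (((((hPi.hasWalk.trans hPa).trans H.ab.hasWalk).trans H.bc.hasWalk).trans hQc).trans
      hQj.symm.hasWalk)
  have h₄ := hG.mod_two_eq_zero_or_le
    (((((hPi'.hasWalk.trans hPd).trans H.de.hasWalk).trans H.eg.hasWalk).trans hQg).trans
      hQj'.symm.hasWalk)
  omega

/-- The two paths meet neither at their ends (odd girth) nor inside (a common inner vertex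
would have two neighbours two apart on each path). -/
lemma disjoint_support [DecidableEq V] : Disjoint P.support.toFinset Q.support.toFinset := by
  rw [Finset.disjoint_left]
  intro x hxP hxQ
  obtain ⟨i, rfl, hi⟩ := Walk.mem_support_iff_exists_getVert.mp (List.mem_toFinset.mp hxP)
  obtain ⟨j, hij, hj⟩ := Walk.mem_support_iff_exists_getVert.mp (List.mem_toFinset.mp hxQ)
  have hca : G.HasWalk c a 2 := H.bc.symm.hasWalk.trans H.ab.symm.hasWalk
  have hdg : G.HasWalk d g 2 := H.de.hasWalk.trans H.eg.hasWalk
  rcases Nat.eq_zero_or_pos i with rfl | hi₀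
  · exact getVert_ne_of_hasWalk hG hQ hca.symm H.ga.symm.hasWalk two_pos one_pos rfl hj
      (hij.trans P.getVert_zero)
  rcases Nat.eq_zero_or_pos j with rfl | hj₀
  · exact getVert_ne_of_hasWalk hG hP hca H.cd.hasWalk two_pos one_pos rfl hi
      (hij.symm.trans Q.getVert_zero)
  rcases hi.eq_or_lt with rfl | hiL
  · exact getVert_ne_of_hasWalk hG hQ H.cd.symm.hasWalk hdg one_pos two_pos rfl hj
      (hij.trans P.getVert_length)
  rcases hj.eq_or_lt with rfl | hjL
  · exact getVert_ne_of_hasWalk hG hP H.ga.hasWalk hdg.symm one_pos two_pos rfl hi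
      (hij.symm.trans Q.getVert_length)
  obtain ⟨i, rfl⟩ : ∃ i', i = i' + 1 := ⟨i - 1, by omega⟩
  obtain ⟨j, rfl⟩ : ∃ j', j = j' + 1 := ⟨j - 1, by omega⟩
  have hP₁ := (P.adj_getVert_succ (i := i) (by omega)).symm
  have hP₂ := P.adj_getVert_succ (i := i + 1) (by omega)
  have hQ₁ := (Q.adj_getVert_succ (i := j) (by omega)).symm
  have hQ₂ := Q.adj_getVert_succ (i := j + 1) (by omega)
  rw [hij] at hQ₁ hQ₂
  exact H.not_adj_getVert_add_two hG hP hQ (by omega) (by omega) hP₁ hP₂ hQ₁ hQ₂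

lemma card_support_union [DecidableEq V] :
    #(P.support.toFinset ∪ Q.support.toFinset ∪ {b, e}) = 4 * k := by
  have hcard {x y : V} (p : G.Walk x y) (hp : p.IsPath) : #p.support.toFinset = p.length + 1 := by
    rw [List.toFinset_card_of_nodup hp.support_nodup, p.length_support]
  have hbe : Disjoint (P.support.toFinset ∪ Q.support.toFinset) {b, e} := by
    simp only [disjoint_insert_right, disjoint_singleton_right, mem_union, List.mem_toFinset,
      not_or]
    exact ⟨⟨H.notMem_support_b hG hP, H.swap.notMem_support_b hG hQ⟩,
      H.notMem_support_e hG hP, H.swap.notMem_support_e hG hQ⟩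
  rw [card_union_of_disjoint hbe, card_union_of_disjoint (H.disjoint_support hG hP hQ),
    hcard P (isPath_of_oddGirthAtLeast hG hP H.hasWalk_three),
    hcard Q (isPath_of_oddGirthAtLeast hG hQ H.swap.hasWalk_three), card_pair H.be.ne]
  omega

/-- A vertex adjacent to `b` or `e` sees at most one vertex of each path, and a vertex adjacent
to neither sees at most two vertices of each path but not two of both. -/
lemma card_filter_adj_le_three [DecidableEq V] [DecidableRel G.Adj] (hk : 2 ≤ k) (v : V) :
    #({x ∈ P.support.toFinset ∪ Q.support.toFinset ∪ {b, e} | G.Adj v x}) ≤ 3 := by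
  have hsplit : #({x ∈ P.support.toFinset ∪ Q.support.toFinset ∪ {b, e} | G.Adj v x}) ≤
      #(P.neighborIndices v) + #(Q.neighborIndices v) +
        ((if G.Adj v b then 1 else 0) + if G.Adj v e then 1 else 0) := by
    rw [filter_union, filter_union]
    grw [card_union_le, card_union_le, P.card_filter_adj_support_le v,
      Q.card_filter_adj_support_le v, card_filter, sum_pair H.be.ne]
  have hP₂ := card_neighborIndices_le_two hG hP H.hasWalk_three v
  have hQ₂ := card_neighborIndices_le_two hG hQ H.swap.hasWalk_three v
  have hPQ : ¬ (1 < #(P.neighborIndices v) ∧ 1 < #(Q.neighborIndices v)) := by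
    rintro ⟨hP₁, hQ₁⟩
    obtain ⟨i, hi, hPi, hPi'⟩ := exists_adj_getVert_add_two hG hP H.hasWalk_three v hP₁
    obtain ⟨j, hj, hQj, hQj'⟩ := exists_adj_getVert_add_two hG hQ H.swap.hasWalk_three v hQ₁
    exact H.not_adj_getVert_add_two hG hP hQ hi hj hPi hPi' hQj hQj'
  by_cases hvb : G.Adj v b
  · have hve : ¬ G.Adj v e := fun hve =>
      absurd (hG.mod_two_eq_zero_or_le ((hvb.hasWalk.trans H.be.hasWalk).trans hve.symm.hasWalk))
        (by omega)
    have := H.card_neighborIndices_le_one_of_adj_b hG hP hvb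
    have := H.swap.card_neighborIndices_le_one_of_adj_b hG hQ hvb
    simp only [hvb, hve, if_true, if_false] at hsplit
    omega
  by_cases hve : G.Adj v e
  · have := H.card_neighborIndices_le_one_of_adj_e hG hP hve
    have := H.swap.card_neighborIndices_le_one_of_adj_e hG hQ hve
    simp only [hvb, hve, if_true, if_false] at hsplit
    omega
  simp only [hvb, hve, if_false] at hsplit
  omega

end TwoPaths

end ChordedHexagon

lemma card_mul_minDegree_le [Fintype V] [DecidableRel G.Adj] (S : Finset V) {t : ℕ}
    (h : ∀ v, #({x ∈ S | G.Adj v x}) ≤ t) : #S * G.minDegree ≤ t * Fintype.card V := by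
  calc #S * G.minDegree = ∑ _u ∈ S, G.minDegree := by rw [sum_const, smul_eq_mul]
    _ ≤ ∑ u ∈ S, G.degree u := sum_le_sum fun u _ => G.minDegree_le_degree u
    _ = ∑ u ∈ S, #(bipartiteAbove G.Adj univ u) := by
      simp [bipartiteAbove, ← card_neighborFinset_eq_degree, neighborFinset_eq_filter]
    _ = ∑ v, #(bipartiteBelow G.Adj S v) := sum_card_bipartiteAbove_eq_sum_card_bipartiteBelow _
    _ ≤ ∑ _v : V, t := sum_le_sum fun v _ => by
      simpa [bipartiteBelow, G.adj_comm] using h v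
    _ = t * Fintype.card V := by rw [sum_const, card_univ, smul_eq_mul, mul_comm]

end SimpleGraph

theorem stmt_6 {V : Type*} [Fintype V] (k n : ℕ) (hk : 2 ≤ k)
    (G : SimpleGraph V) [DecidableRel G.Adj] (hn : Fintype.card V = n)
    (hdeg : 3 * (n : ℝ) / (4 * k) < G.minDegree)
    (hgirth : ∀ (v : V) (c : G.Walk v v), c.IsCycle → Odd c.length → 2 * k + 1 ≤ c.length)
    (hmax : ∀ u v : V, u ≠ v → ¬ G.Adj u v →
      ∃ (w : V) (c : (G ⊔ SimpleGraph.fromEdgeSet {s(u, v)}).Walk w w),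
        c.IsCycle ∧ Odd c.length ∧ c.length ≤ 2 * k - 1) :
    ¬ Nonempty (Phi ↪g G) := by
  classical
  rintro ⟨f⟩
  have hG : G.OddGirthAtLeast (2 * k + 1) := oddGirthAtLeast_of_isCycle hgirth
  have H : G.ChordedHexagon (f 0) (f 1) (f 2) (f 3) (f 4) (f 5) := .of_hom f.toHom
  obtain ⟨P, hP⟩ := exists_walk_of_exists_isCycle_sup hG H.hasWalk_three
    (hmax (f 0) (f 3) (f.injective.ne (by decide)) (by rw [f.map_adj_iff]; simp [Phi]))
  obtain ⟨Q, hQ⟩ := exists_walk_of_exists_isCycle_sup hG H.swap.hasWalk_three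
    (hmax (f 2) (f 5) (f.injective.ne (by decide)) (by rw [f.map_adj_iff]; simp [Phi]))
  have hcount := card_mul_minDegree_le _ (H.card_filter_adj_le_three hG hP hQ hk)
  rw [H.card_support_union hG hP hQ, hn] at hcount
  have hk' : (0 : ℝ) < 4 * k := by positivity
  rw [div_lt_iff₀ hk'] at hdeg
  have : (4 * k * G.minDegree : ℝ) ≤ 3 * n := by exact_mod_cast hcount
  linarith
end

section
/- For all integers k ≥ 2 and n, no graph G ∈ 𝒢_{n,k} contains a copy of the graph Φ′ consisting of a cycle v_0 v_1 … v_{4k−1} v_0 of length 4k together with the three diagonals {v_0, v_{2k}}, {v_1, v_{2k+1}}, and {v_2, v_{2k+2}} (not necessarily induced). -/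
/-!
Summing degrees over the `4k` cycle vertices gives more than `3n` incidences, so some vertex `u`
has at least four neighbours on the cycle. Any two of them, joined through `u` and along the
cycle (possibly across a diagonal), close a walk, and every odd closed walk has length at least
`2k + 1`. Represent cycle positions by integers in `(-2k, 2k]`. Two neighbours of opposite parity
must then be almost antipodal (gap `2k ± 1`). For two neighbours `x < y` of equal parity, the walks
through the diagonals `{0, 2k}` and `{1, 2k + 1}` force `y - x = 2` or `x + y ∈ {0, 2}`. No four
integers in `(-2k, 2k]` satisfy all of this.
-/

open Finset

theorem sub_eq_two_or_add_eq_of_abs_le {x y : ℤ} (hxy : x < y) (heven : Even (y - x))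
    (h₀ : |y| ≤ |x| + 2) (h₀' : |x| ≤ |y| + 2) (h₁ : |x - 1| ≤ |y - 1| + 2) :
    y - x = 2 ∨ x + y = 0 ∨ x + y = 2 := by
  simp only [Int.abs_eq_natAbs] at h₀ h₀' h₁
  obtain ⟨r, hr⟩ := heven
  omega

theorem card_le_three_of_odd_sub_of_even_sub {k : ℤ} (hk : 2 ≤ k) {T : Finset ℤ}
    (hT : ∀ x ∈ T, -(2 * k) < x ∧ x ≤ 2 * k)
    (hodd : ∀ x ∈ T, ∀ y ∈ T, x < y → Odd (y - x) → y - x = 2 * k - 1 ∨ y - x = 2 * k + 1)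
    (heven : ∀ x ∈ T, ∀ y ∈ T, x < y → Even (y - x) → y - x = 2 ∨ x + y = 0 ∨ x + y = 2) :
    #T ≤ 3 := by
  by_contra! h
  obtain ⟨U, hUT, hU⟩ := exists_subset_card_eq h
  set e := U.orderEmbOfFin hU
  have mem (i : Fin 4) : e i ∈ T := hUT (U.orderEmbOfFin_mem hU i)
  have pair {i j : Fin 4} (hij : i < j) : e i < e j ∧
      (((e j - e i) % 2 = 1 ∧ (e j - e i = 2 * k - 1 ∨ e j - e i = 2 * k + 1)) ∨
      ((e j - e i) % 2 = 0 ∧ (e j - e i = 2 ∨ e i + e j = 0 ∨ e i + e j = 2))) := by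
    have hlt := e.strictMono hij
    refine ⟨hlt, ?_⟩
    rcases Int.emod_two_eq_zero_or_one (e j - e i) with h | h
    · exact .inr ⟨h, heven _ (mem i) _ (mem j) hlt (Int.even_iff.2 h)⟩
    · exact .inl ⟨h, hodd _ (mem i) _ (mem j) hlt (Int.odd_iff.2 h)⟩
  have h01 := pair (show (0 : Fin 4) < 1 by decide)
  have h02 := pair (show (0 : Fin 4) < 2 by decide)
  have h03 := pair (show (0 : Fin 4) < 3 by decide)
  have h12 := pair (show (1 : Fin 4) < 2 by decide)
  have h13 := pair (show (1 : Fin 4) < 3 by decide)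
  have h23 := pair (show (2 : Fin 4) < 3 by decide)
  have b0 := hT _ (mem 0)
  have b3 := hT _ (mem 3)
  omega

namespace SimpleGraph

variable {V : Type*} {G : SimpleGraph V}

theorem Walk.exists_isPath_or_exists_odd_isCycle [DecidableEq V] {u v : V} (p : G.Walk u v) :
    (∃ q : G.Walk u v, q.IsPath ∧ q.length ≤ p.length ∧ Even (q.length + p.length)) ∨
      ∃ (w : V) (c : G.Walk w w), c.IsCycle ∧ Odd c.length ∧ c.length ≤ p.length := by
  induction p with
  | nil => exact .inl ⟨nil, .nil, le_rfl, by simp⟩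
  | @cons u u' v h p ih =>
    simp only [length_cons, Nat.even_iff, Nat.odd_iff] at ih ⊢
    rcases ih with ⟨q, hq, hle, hpar⟩ | ⟨w, c, hc, hodd, hle⟩
    · by_cases hu : u ∈ q.support
      · have hlen := congrArg length (q.take_spec hu)
        rw [length_append] at hlen
        by_cases heven : (q.takeUntil u hu).length % 2 = 0
        · have hpos : (q.takeUntil u hu).length ≠ 0 := fun h0 =>
            h.ne (eq_of_length_eq_zero h0).symm
          have hcycle : (cons h (q.takeUntil u hu)).IsCycle :=
            isCycle_iff_isPath_tail_and_le_length.2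
              ⟨by simpa using hq.takeUntil hu, by simp only [length_cons]; omega⟩
          exact .inr ⟨u, _, hcycle, by simp only [length_cons]; omega,
            by simp only [length_cons]; omega⟩
        · exact .inl ⟨q.dropUntil u hu, hq.dropUntil hu, by omega, by omega⟩
      · exact .inl ⟨cons h q, hq.cons hu, by simp only [length_cons]; omega,
          by simp only [length_cons]; omega⟩
    · exact .inr ⟨w, c, hc, hodd, by omega⟩

theorem Walk.exists_odd_isCycle_length_le {v : V} (p : G.Walk v v) (hp : Odd p.length) :
    ∃ (w : V) (c : G.Walk w w), c.IsCycle ∧ Odd c.length ∧ c.length ≤ p.length := by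
  classical
  refine p.exists_isPath_or_exists_odd_isCycle.resolve_left ?_
  rintro ⟨q, hq, -, hpar⟩
  rw [(isPath_iff_nil.1 hq).length_eq_zero, zero_add] at hpar
  exact Nat.not_even_iff_odd.2 hp hpar

section OddGirth

variable {g : ℕ} (hg : ∀ (v : V) (c : G.Walk v v), c.IsCycle → Odd c.length → g ≤ c.length)
include hg

theorem le_length_of_odd {v : V} (p : G.Walk v v) (hp : Odd p.length) : g ≤ p.length := by
  obtain ⟨w, c, hc, hodd, hle⟩ := p.exists_odd_isCycle_length_le hp
  exact (hg w c hc hodd).trans hle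

end OddGirth

section CycleMap

variable {N : ℕ} {f : ZMod N → V} (hf : ∀ i, G.Adj (f i) (f (i + 1)))
include hf

theorem exists_walk_length_eq_of_add_natCast {p : ZMod N} (n : ℕ) :
    ∃ w : G.Walk (f p) (f (p + n)), w.length = n := by
  induction n with
  | zero => exact ⟨Walk.nil.copy rfl (by simp), by simp⟩
  | succ n ih =>
    obtain ⟨w, hw⟩ := ih
    exact ⟨(w.concat (hf _)).copy rfl (by push_cast; ring_nf), by simp [hw]⟩

theorem exists_walk_length_eq_natAbs {p q : ZMod N} {m : ℤ} (h : p + m = q) :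
    ∃ w : G.Walk (f p) (f q), w.length = m.natAbs := by
  subst h
  obtain ⟨n, rfl | rfl⟩ := Int.eq_nat_or_neg m
  · obtain ⟨w, hw⟩ := exists_walk_length_eq_of_add_natCast hf (p := p) n
    exact ⟨w.copy rfl (by simp), by simp [hw]⟩
  · obtain ⟨w, hw⟩ := exists_walk_length_eq_of_add_natCast hf (p := p - n) n
    exact ⟨w.reverse.copy (by simp) (by simp [sub_eq_add_neg]), by simp [hw]⟩

variable {g : ℕ} (hg : ∀ (v : V) (c : G.Walk v v), c.IsCycle → Odd c.length → g ≤ c.length)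
include hg

theorem le_natAbs_add_two {u : V} {p q : ZMod N} (hp : G.Adj u (f p)) (hq : G.Adj u (f q))
    {m : ℤ} (hm : p + m = q) (hodd : Odd m) : g ≤ m.natAbs + 2 := by
  obtain ⟨w, hw⟩ := exists_walk_length_eq_natAbs hf hm
  have := le_length_of_odd hg (.cons hp (w.concat hq.symm)) ?_
  · simpa [hw] using this
  · simpa [hw, Nat.odd_add_one, Int.natAbs_odd] using hodd

theorem le_natAbs_add_natAbs_add_three {u : V} {p q a b : ZMod N} (hp : G.Adj u (f p))
    (hq : G.Adj u (f q)) (hab : G.Adj (f a) (f b)) {m₁ m₂ : ℤ} (h₁ : p + m₁ = a) (h₂ : b + m₂ = q)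
    (heven : Even (m₁ + m₂)) : g ≤ m₁.natAbs + m₂.natAbs + 3 := by
  obtain ⟨w₁, hw₁⟩ := exists_walk_length_eq_natAbs hf h₁
  obtain ⟨w₂, hw₂⟩ := exists_walk_length_eq_natAbs hf h₂
  have := le_length_of_odd hg (.cons hp (w₁.append (.cons hab (w₂.concat hq.symm)))) ?_
  · simp only [Walk.length_cons, Walk.length_append, Walk.length_concat, hw₁, hw₂] at this
    omega
  · simp only [Walk.length_cons, Walk.length_append, Walk.length_concat, hw₁, hw₂]
    obtain ⟨r, hr⟩ := heven
    rw [Nat.odd_iff]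
    omega

end CycleMap

section Diagonals

variable {k : ℕ} {f : ZMod (4 * k) → V} (hf : ∀ i, G.Adj (f i) (f (i + 1)))
  (hg : ∀ (v : V) (c : G.Walk v v), c.IsCycle → Odd c.length → 2 * k + 1 ≤ c.length)
include hf hg

theorem sub_eq_of_odd_sub {u : V} {p q : ZMod (4 * k)} (hp : G.Adj u (f p))
    (hq : G.Adj u (f q)) {x y : ℤ} (hx : (x : ZMod (4 * k)) = p) (hy : (y : ZMod (4 * k)) = q)
    (hxy : x < y) (hyx : y - x < 4 * k) (hodd : Odd (y - x)) :
    y - x = 2 * k - 1 ∨ y - x = 2 * k + 1 := by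
  have h4k : ((4 * k : ℕ) : ZMod (4 * k)) = 0 := ZMod.natCast_self _
  push_cast at h4k
  have h₁ := le_natAbs_add_two hf hg hp hq (m := y - x) (by push_cast; rw [hx, hy]; ring) hodd
  have h₂ := le_natAbs_add_two hf hg hp hq (m := y - x - 4 * k)
    (by push_cast; rw [hx, hy, h4k]; ring) (hodd.sub_even ⟨2 * k, by ring⟩)
  obtain ⟨r, hr⟩ := hodd
  omega

theorem abs_le_abs_add_two {u : V} {a p q : ZMod (4 * k)} (hd : G.Adj (f a) (f (a + 2 * k)))
    (hp : G.Adj u (f p)) (hq : G.Adj u (f q)) {x y : ℤ} (hx : (x : ZMod (4 * k)) = p - a)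
    (hy : (y : ZMod (4 * k)) = q - a) (hy' : |y| ≤ 2 * k) (heven : Even (y - x)) :
    |y| ≤ |x| + 2 := by
  have h4k : ((4 * k : ℕ) : ZMod (4 * k)) = 0 := ZMod.natCast_self _
  push_cast at h4k
  have h₁ := le_natAbs_add_natAbs_add_three hf hg hp hq hd (m₁ := -x) (m₂ := y - 2 * k)
    (by push_cast; rw [hx]; ring) (by push_cast; rw [hy]; ring)
    (by rw [show -x + (y - 2 * k) = y - x - 2 * k by ring]; exact heven.sub (even_two_mul _))
  have h₂ := le_natAbs_add_natAbs_add_three hf hg hp hq hd (m₁ := -x) (m₂ := y + 2 * k)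
    (by push_cast; rw [hx]; ring) (by push_cast; rw [hy]; linear_combination h4k)
    (by rw [show -x + (y + 2 * k) = y - x + 2 * k by ring]; exact heven.add (even_two_mul _))
  simp only [Int.abs_eq_natAbs] at hy' ⊢
  omega

theorem sub_eq_two_or_add_eq_of_even_sub (hd₀ : G.Adj (f 0) (f (2 * k)))
    (hd₁ : G.Adj (f 1) (f (2 * k + 1))) {u : V} {p q : ZMod (4 * k)} (hp : G.Adj u (f p))
    (hq : G.Adj u (f q)) {x y : ℤ} (hx : (x : ZMod (4 * k)) = p) (hy : (y : ZMod (4 * k)) = q)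
    (hx' : -(2 * k) < x) (hy' : y ≤ 2 * k) (hxy : x < y) (heven : Even (y - x)) :
    y - x = 2 ∨ x + y = 0 ∨ x + y = 2 := by
  have hd₀' : G.Adj (f 0) (f (0 + 2 * k)) := by rwa [zero_add]
  have hd₁' : G.Adj (f 1) (f (1 + 2 * k)) := by rwa [add_comm]
  have heven' : Even (x - y) := by rwa [← even_neg, neg_sub]
  refine sub_eq_two_or_add_eq_of_abs_le hxy heven ?_ ?_ ?_
  · exact abs_le_abs_add_two hf hg hd₀' hp hq (by rw [hx, sub_zero]) (by rw [hy, sub_zero])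
      (abs_le.2 ⟨by omega, by omega⟩) heven
  · exact abs_le_abs_add_two hf hg hd₀' hq hp (by rw [hy, sub_zero]) (by rw [hx, sub_zero])
      (abs_le.2 ⟨by omega, by omega⟩) heven'
  · refine abs_le_abs_add_two hf hg hd₁' hq hp (x := y - 1) (by push_cast; rw [hy])
      (by push_cast; rw [hx]) (abs_le.2 ⟨by omega, by omega⟩) (by rwa [sub_sub_sub_cancel_right])

theorem card_filter_adj_le_three [NeZero (4 * k)] [DecidableRel G.Adj] (hk : 2 ≤ k)
    (hd₀ : G.Adj (f 0) (f (2 * k))) (hd₁ : G.Adj (f 1) (f (2 * k + 1))) (u : V) :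
    #{i | G.Adj u (f i)} ≤ 3 := by
  have hrange (p : ZMod (4 * k)) : -(2 * k : ℤ) < p.valMinAbs ∧ p.valMinAbs ≤ 2 * k := by
    have := ZMod.valMinAbs_mem_Ioc p
    push_cast [Set.mem_Ioc] at this
    omega
  rw [← card_image_of_injective _ ZMod.injective_valMinAbs]
  refine card_le_three_of_odd_sub_of_even_sub (k := k) (by omega) ?_ ?_ ?_
  · simp only [mem_image]
    rintro _ ⟨p, -, rfl⟩
    exact hrange p
  · simp only [mem_image, mem_filter]
    rintro _ ⟨p, ⟨-, hp⟩, rfl⟩ _ ⟨q, ⟨-, hq⟩, rfl⟩ hlt hodd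
    exact sub_eq_of_odd_sub hf hg hp hq (ZMod.coe_valMinAbs p) (ZMod.coe_valMinAbs q) hlt
      (by linarith [hrange p, hrange q]) hodd
  · simp only [mem_image, mem_filter]
    rintro _ ⟨p, ⟨-, hp⟩, rfl⟩ _ ⟨q, ⟨-, hq⟩, rfl⟩ hlt heven
    exact sub_eq_two_or_add_eq_of_even_sub hf hg hd₀ hd₁ hp hq (ZMod.coe_valMinAbs p)
      (ZMod.coe_valMinAbs q) (hrange p).1 (hrange q).2 hlt heven

end Diagonals

theorem exists_lt_card_filter_adj [Fintype V] [DecidableRel G.Adj] {ι : Type*} [Fintype ι]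
    (f : ι → V) {r : ℕ} (h : Fintype.card V * r < Fintype.card ι * G.minDegree) :
    ∃ u, r < #{i | G.Adj u (f i)} := by
  by_contra! hle
  have hcount : ∑ u, #{i | G.Adj u (f i)} = ∑ i, G.degree (f i) := by
    simp only [card_filter, ← card_neighborFinset_eq_degree, neighborFinset_eq_filter, adj_comm]
    exact sum_comm
  have hupper : ∑ u, #{i | G.Adj u (f i)} ≤ Fintype.card V * r := by
    simpa using sum_le_sum fun u (_ : u ∈ univ) => hle u
  have hlower : Fintype.card ι * G.minDegree ≤ ∑ i, G.degree (f i) := by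
    simpa using sum_le_sum fun i (_ : i ∈ univ) => G.minDegree_le_degree (f i)
  omega

end SimpleGraph

theorem stmt_7_general {V : Type*} [Fintype V] (k n : ℕ) (hk : 2 ≤ k)
    (G : SimpleGraph V) [DecidableRel G.Adj] (hn : Fintype.card V = n)
    (hdeg : 3 * (n : ℝ) / (4 * k) < G.minDegree)
    (hgirth : ∀ (v : V) (c : G.Walk v v), c.IsCycle → Odd c.length → 2 * k + 1 ≤ c.length) :
    ¬ ∃ f : ZMod (4 * k) → V, Function.Injective f ∧
        (∀ i : ZMod (4 * k), G.Adj (f i) (f (i + 1))) ∧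
        G.Adj (f 0) (f (2 * k)) ∧ G.Adj (f 1) (f (2 * k + 1)) ∧
        G.Adj (f 2) (f (2 * k + 2)) := by
  rintro ⟨f, -, hf, hd₀, hd₁, -⟩
  have : NeZero (4 * k) := ⟨by omega⟩
  have hcount : Fintype.card V * 3 < Fintype.card (ZMod (4 * k)) * G.minDegree := by
    rw [ZMod.card, hn]
    rw [div_lt_iff₀ (by positivity)] at hdeg
    exact_mod_cast (by linarith : (n * 3 : ℝ) < 4 * k * G.minDegree)
  obtain ⟨u, hu⟩ := G.exists_lt_card_filter_adj f hcount
  exact hu.not_ge (G.card_filter_adj_le_three hf hgirth hk hd₀ hd₁ u)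

theorem stmt_7 {V : Type*} [Fintype V] (k n : ℕ) (hk : 2 ≤ k)
    (G : SimpleGraph V) [DecidableRel G.Adj] (hn : Fintype.card V = n)
    (hdeg : 3 * (n : ℝ) / (4 * k) < G.minDegree)
    (hgirth : ∀ (v : V) (c : G.Walk v v), c.IsCycle → Odd c.length → 2 * k + 1 ≤ c.length)
    (hmax : ∀ u v : V, u ≠ v → ¬ G.Adj u v →
      ∃ (w : V) (c : (G ⊔ SimpleGraph.fromEdgeSet {s(u, v)}).Walk w w),
        c.IsCycle ∧ Odd c.length ∧ c.length ≤ 2 * k - 1) :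
    ¬ ∃ f : ZMod (4 * k) → V, Function.Injective f ∧
        (∀ i : ZMod (4 * k), G.Adj (f i) (f (i + 1))) ∧
        G.Adj (f 0) (f (2 * k)) ∧ G.Adj (f 1) (f (2 * k + 1)) ∧
        G.Adj (f 2) (f (2 * k + 2)) :=
  stmt_7_general k n hk G hn hdeg hgirth
end

section
/- For all integers k ≥ 2 and n, every graph G ∈ 𝒢_{n,k} that is not bipartite contains a cycle of length exactly 2k+1. -/
/-!
Take a shortest odd closed walk `C`; it is a cycle, so the odd girth gives `|C| ≥ 2k + 1`.
If `|C| ≥ 2k + 3`, let `a` and `b` be the vertices at distance three along `C`. They are distinct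
and non-adjacent, since otherwise a triangle or the chord `ab` would give a shorter odd closed
walk. By maximality, adding `ab` creates an odd cycle of length at most `2k - 1`; it must use `ab`,
so `G` has an even `a`–`b` walk of length at most `2k - 2`. Closing it with the three edges of `C`
from `a` to `b` gives an odd closed walk of length at most `2k + 1 < |C|`, a contradiction.
Hence `|C| = 2k + 1`.
-/

open SimpleGraph

namespace SimpleGraph

variable {V : Type*} {G : SimpleGraph V}

namespace Walk

lemma exists_eq_append_loop_append_of_not_isPath {u v : V} {p : G.Walk u v} (hp : ¬p.IsPath) :
    ∃ (w : V) (a : G.Walk u w) (c : G.Walk w w) (b : G.Walk w v),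
      ¬c.Nil ∧ p = a.append (c.append b) := by
  classical
  induction p with
  | nil => exact absurd IsPath.nil hp
  | @cons u x v h q ih =>
    by_cases hq : q.IsPath
    · have hu : u ∈ q.support := by simpa [cons_isPath_iff, hq] using hp
      exact ⟨u, nil, cons h (q.takeUntil u hu), q.dropUntil u hu, not_nil_cons,
        by simp [take_spec]⟩
    · obtain ⟨w, a, c, b, hc, rfl⟩ := ih hq
      exact ⟨w, cons h a, c, b, hc, rfl⟩

lemma exists_isCycle_odd_length_le {v : V} (p : G.Walk v v) (hp : Odd p.length) :
    ∃ (u : V) (c : G.Walk u u), c.IsCycle ∧ Odd c.length ∧ c.length ≤ p.length := by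
  induction hl : p.length using Nat.strong_induction_on generalizing v with
  | _ n ih =>
  subst hl
  cases p with
  | nil => simp at hp
  | @cons _ x _ h q =>
    by_cases hq : q.IsPath
    · have hq0 : q.length ≠ 0 := fun h0 => h.ne (q.eq_of_length_eq_zero h0).symm
      refine ⟨v, cons h q, isCycle_iff_isPath_tail_and_le_length.mpr ⟨by simpa using hq, ?_⟩,
        hp, le_rfl⟩
      rw [length_cons, Nat.odd_add_one, Nat.not_odd_iff_even] at hp
      rw [length_cons]
      obtain ⟨t, ht⟩ := hp
      omega
    · obtain ⟨w, a, c, b, hc, rfl⟩ := exists_eq_append_loop_append_of_not_isPath hq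
      have hc0 : 0 < c.length := not_nil_iff_lt_length.mp hc
      have hlen : (cons h (a.append (c.append b))).length =
          (cons h (a.append b)).length + c.length := by
        simp only [length_cons, length_append]; ring
      have hb : 0 < (cons h (a.append b)).length := by simp
      rw [hlen, Nat.odd_add] at hp
      by_cases hco : Odd c.length
      · obtain ⟨u, d, hd, hdo, hdl⟩ := ih c.length (by omega) c hco rfl
        exact ⟨u, d, hd, hdo, by omega⟩
      · obtain ⟨u, d, hd, hdo, hdl⟩ := ih (cons h (a.append b)).length (by omega) _
          (hp.mpr (Nat.not_odd_iff_even.mp hco)) rfl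
        exact ⟨u, d, hd, hdo, by omega⟩

lemma IsTrail.exists_walk_of_mem_edges {w u v : V} {c : G.Walk w w} (hc : c.IsTrail)
    (he : s(u, v) ∈ c.edges) :
    ∃ p : G.Walk u v, p.length + 1 = c.length ∧ s(u, v) ∉ p.edges := by
  have h := c.adj_of_mem_edges he
  have hnd := hc.edges_nodup
  rcases (isSubwalk_toWalk_iff_mem_edges h).mpr he with ⟨ru, rv, rfl⟩ | ⟨ru, rv, rfl⟩
  · refine ⟨(rv.append ru).reverse, ?_, ?_⟩
    · simp only [length_reverse, length_append, Adj.toWalk, length_cons, length_nil]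
      omega
    simp only [edges_append, Adj.toWalk, edges_cons, edges_nil, List.nodup_append] at hnd
    simp only [reverse_append, edges_append, edges_reverse, List.mem_append, List.mem_reverse]
    grind
  · refine ⟨rv.append ru, ?_, ?_⟩
    · simp only [length_append, Adj.toWalk, length_cons, length_nil]
      omega
    simp only [edges_append, Adj.toWalk, edges_cons, edges_nil, List.nodup_append,
      Sym2.eq_swap] at hnd
    simp only [edges_append, List.mem_append]
    grind

lemma edges_subset_edgeSet_of_notMem_edges {e : Sym2 V} {a b : V}
    {p : (G ⊔ fromEdgeSet {e}).Walk a b} (he : e ∉ p.edges) : ∀ e' ∈ p.edges, e' ∈ G.edgeSet := by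
  intro e' he'
  have := p.edges_subset_edgeSet he'
  rw [edgeSet_sup, edgeSet_fromEdgeSet] at this
  rcases this with h | ⟨rfl, -⟩
  · exact h
  · exact absurd he' he

lemma IsTrail.exists_loop_or_walk_of_sup_fromEdgeSet {u v w : V}
    {c : (G ⊔ fromEdgeSet {s(u, v)}).Walk w w} (hc : c.IsTrail) :
    (∃ d : G.Walk w w, d.length = c.length) ∨ ∃ p : G.Walk u v, p.length + 1 = c.length := by
  by_cases he : s(u, v) ∈ c.edges
  · obtain ⟨p, hp, hpe⟩ := hc.exists_walk_of_mem_edges he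
    exact .inr ⟨p.transfer G (edges_subset_edgeSet_of_notMem_edges hpe), by simpa using hp⟩
  · exact .inl ⟨c.transfer G (edges_subset_edgeSet_of_notMem_edges he), by simp⟩

end Walk

lemma exists_shortest_odd_isCycle (h : ∃ (v : V) (p : G.Walk v v), Odd p.length) :
    ∃ (v : V) (c : G.Walk v v), c.IsCycle ∧ Odd c.length ∧
      ∀ (u : V) (p : G.Walk u u), Odd p.length → c.length ≤ p.length := by
  classical
  have hℓ : ∃ ℓ, ∃ (v : V) (p : G.Walk v v), Odd p.length ∧ p.length = ℓ :=
    let ⟨v, p, hp⟩ := h; ⟨_, v, p, hp, rfl⟩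
  obtain ⟨v, p, hp, hpℓ⟩ := Nat.find_spec hℓ
  obtain ⟨u, c, hc, hco, hcp⟩ := p.exists_isCycle_odd_length_le hp
  exact ⟨u, c, hc, hco, fun w q hq => hcp.trans (hpℓ ▸ Nat.find_min' hℓ ⟨w, q, hq, rfl⟩)⟩

lemma Walk.length_le_add_two_of_shortest_odd {m : ℕ} (hm : 1 ≤ m)
    (hclose : ∀ u v : V, u ≠ v → ¬G.Adj u v →
      ∃ (w : V) (c : (G ⊔ fromEdgeSet {s(u, v)}).Walk w w),
        c.IsCycle ∧ Odd c.length ∧ c.length ≤ m)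
    {a : V} (c : G.Walk a a) (hc : Odd c.length)
    (hmin : ∀ (u : V) (p : G.Walk u u), Odd p.length → c.length ≤ p.length) :
    c.length ≤ m + 2 := by
  by_contra! hlong
  rw [Nat.odd_iff] at hc
  obtain _ | ⟨h₁, _ | ⟨h₂, _ | ⟨h₃, d⟩⟩⟩ := c
  all_goals simp only [Walk.length_cons, Walk.length_nil] at hlong hc hmin
  all_goals try omega
  rename_i _ b
  have hne : a ≠ b := by
    rintro rfl
    have := hmin a (.cons h₁ (.cons h₂ (.cons h₃ .nil)))
      (by simp only [Walk.length_cons, Walk.length_nil]; decide)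
    simp only [Walk.length_cons, Walk.length_nil] at this
    omega
  have hnadj : ¬G.Adj a b := fun h => by
    have := hmin a (.cons h d) (by simp only [Walk.length_cons, Nat.odd_iff]; omega)
    simp only [Walk.length_cons] at this
    omega
  obtain ⟨w, c', hc', hodd, hlen⟩ := hclose a b hne hnadj
  rcases hc'.isTrail.exists_loop_or_walk_of_sup_fromEdgeSet with ⟨d', hd'⟩ | ⟨p, hp⟩
  · have := hmin w d' (hd' ▸ hodd)
    omega
  · rw [Nat.odd_iff] at hodd
    have := hmin a (.cons h₁ (.cons h₂ (.cons h₃ p.reverse)))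
      (by simp only [Walk.length_cons, Walk.length_reverse, Nat.odd_iff]; omega)
    simp only [Walk.length_cons, Walk.length_reverse] at this
    omega

end SimpleGraph

theorem stmt_11_general {V : Type*} (k : ℕ) (hk : 2 ≤ k)
    (G : SimpleGraph V)
    (hgirth : ∀ (v : V) (c : G.Walk v v), c.IsCycle → Odd c.length → 2 * k + 1 ≤ c.length)
    (hmax : ∀ u v : V, u ≠ v → ¬ G.Adj u v →
      ∃ (w : V) (c : (G ⊔ SimpleGraph.fromEdgeSet {s(u, v)}).Walk w w),
        c.IsCycle ∧ Odd c.length ∧ c.length ≤ 2 * k - 1)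
    (hnotbip : ¬ G.Colorable 2) :
    ∃ (v : V) (c : G.Walk v v), c.IsCycle ∧ c.length = 2 * k + 1 := by
  obtain ⟨v, p, hp⟩ : ∃ (v : V) (p : G.Walk v v), Odd p.length := by
    simpa [two_colorable_iff_forall_loop_even] using hnotbip
  obtain ⟨a, c, hc, hodd, hmin⟩ := exists_shortest_odd_isCycle ⟨v, p, hp⟩
  have hle := c.length_le_add_two_of_shortest_odd (by omega) hmax hodd hmin
  exact ⟨a, c, hc, le_antisymm (by omega) (hgirth a c hc hodd)⟩

theorem stmt_11 {V : Type*} [Fintype V] (k n : ℕ) (hk : 2 ≤ k)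
    (G : SimpleGraph V) [DecidableRel G.Adj] (hn : Fintype.card V = n)
    (hdeg : 3 * (n : ℝ) / (4 * k) < G.minDegree)
    (hgirth : ∀ (v : V) (c : G.Walk v v), c.IsCycle → Odd c.length → 2 * k + 1 ≤ c.length)
    (hmax : ∀ u v : V, u ≠ v → ¬ G.Adj u v →
      ∃ (w : V) (c : (G ⊔ SimpleGraph.fromEdgeSet {s(u, v)}).Walk w w),
        c.IsCycle ∧ Odd c.length ∧ c.length ≤ 2 * k - 1)
    (hnotbip : ¬ G.Colorable 2) :
    ∃ (v : V) (c : G.Walk v v), c.IsCycle ∧ c.length = 2 * k + 1 :=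
  stmt_11_general k hk G hgirth hmax hnotbip
end

section
/- Let k ≥ 2, let G be a graph with odd girth at least 2k+1, let C be a cycle of length 2k+1 in G, and let x be a vertex of G not on C. Then x has at most two neighbours on C, and if x has exactly two neighbours on C, then these two neighbours are at distance two along C. -/
/-!
If `x` is adjacent to the vertices at positions `i < j` of the cycle, the two arcs of the cycle
between them have lengths `j - i` and `2k + 1 - (j - i)`, of opposite parity. Closing the odd one
up through `x` yields an odd cycle, of length at least `2k + 1` by the odd girth, which forces
`j - i ∈ {2, 2k - 1}`. Three neighbours would have three such gaps, the largest being the sum of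
the other two, which is impossible once `k ≥ 2`.
-/

namespace SimpleGraph.Walk

variable {V : Type*} {G : SimpleGraph V}

lemma IsPath.isCycle_cons_concat {x a b : V} {p : G.Walk a b} (hp : p.IsPath)
    (hxp : x ∉ p.support) (ha : G.Adj x a) (hb : G.Adj b x) (hab : a ≠ b) :
    (cons ha (p.concat hb)).IsCycle := by
  refine (cons_isCycle_iff _ ha).mpr ⟨hp.concat hxp hb, fun he => ?_⟩
  rw [edges_concat, List.concat_eq_append, List.mem_append, List.mem_singleton, Sym2.eq_iff] at he
  rcases he with he | ⟨rfl, -⟩ | ⟨-, rfl⟩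
  · exact hxp (p.fst_mem_support_of_mem_edges he)
  · exact hxp p.end_mem_support
  · exact hab rfl

variable {v : V} {c : G.Walk v v}

lemma IsCycle.exists_isPath_inner_arc (hc : c.IsCycle) {i j : ℕ} (hij : i ≤ j)
    (hj : j < c.length) :
    ∃ p : G.Walk (c.getVert i) (c.getVert j),
      p.IsPath ∧ p.length = j - i ∧ p.support ⊆ c.support := by
  have hstart : (c.take j).getVert i = c.getVert i := by simp [hij]
  refine ⟨((c.take j).drop i).copy hstart rfl, by simpa using (hc.isPath_take hj).drop i,
    by simp only [length_copy, drop_length, take_length]; omega, ?_⟩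
  simp only [support_copy, drop_support_eq_support_drop_min, support_take]
  exact fun y hy => List.mem_of_mem_take (List.mem_of_mem_drop hy)

lemma IsCycle.exists_isPath_outer_arc (hc : c.IsCycle) {i j : ℕ} (hij : i < j)
    (hj : j ≤ c.length) :
    ∃ p : G.Walk (c.getVert j) (c.getVert i),
      p.IsPath ∧ p.length = c.length - j + i ∧ p.support ⊆ c.support := by
  refine ⟨(c.drop j).append (c.take i), ?_,
    by simp only [length_append, drop_length, take_length]; omega, ?_⟩
  · rw [← IsPath.getVert_injOn_iff]
    intro s hs t ht hst
    simp only [Set.mem_ofPred_eq, length_append, drop_length, take_length] at hs ht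
    simp only [getVert_append, drop_length, drop_getVert, take_getVert] at hst
    split_ifs at hst <;>
      have := hc.getVert_injOn' (by rw [Set.mem_ofPred_eq]; omega)
        (by rw [Set.mem_ofPred_eq]; omega) hst <;>
      omega
  · simp only [support_append, support_take, drop_support_eq_support_drop_min]
    intro y hy
    rcases List.mem_append.mp hy with hy | hy
    · exact List.mem_of_mem_drop hy
    · exact List.mem_of_mem_take (List.mem_of_mem_tail hy)

lemma IsCycle.sub_eq_two_or_sub_eq_length_sub_two_of_adj (hc : c.IsCycle)
    (hodd : Odd c.length)
    (hgirth : ∀ (u : V) (w : G.Walk u u), w.IsCycle → Odd w.length → c.length ≤ w.length)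
    {x : V} (hx : x ∉ c.support) {i j : ℕ} (hij : i < j) (hj : j < c.length)
    (hxi : G.Adj x (c.getVert i)) (hxj : G.Adj x (c.getVert j)) :
    j - i = 2 ∨ j - i = c.length - 2 := by
  have hne : c.getVert i ≠ c.getVert j := fun h => by
    have := hc.getVert_injOn' (by rw [Set.mem_ofPred_eq]; omega)
      (by rw [Set.mem_ofPred_eq]; omega) h
    omega
  obtain ⟨p, hp, hpl, hps⟩ := hc.exists_isPath_inner_arc hij.le hj
  obtain ⟨q, hq, hql, hqs⟩ := hc.exists_isPath_outer_arc hij hj.le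
  rw [Nat.odd_iff] at hodd
  rcases Nat.mod_two_eq_zero_or_one (j - i) with hgap | hgap
  · have := hgirth x _ (hq.isCycle_cons_concat (fun h => hx (hqs h)) hxj hxi.symm hne.symm)
      (by rw [Nat.odd_iff]; simp only [length_cons, length_concat]; omega)
    simp only [length_cons, length_concat] at this
    omega
  · have := hgirth x _ (hp.isCycle_cons_concat (fun h => hx (hps h)) hxi hxj.symm hne)
      (by rw [Nat.odd_iff]; simp only [length_cons, length_concat]; omega)
    simp only [length_cons, length_concat] at this
    omega

end SimpleGraph.Walk

lemma Int.emod_eq_of_eq_add_mul {a n r q : ℤ} (h : a = r + n * q) (hr : 0 ≤ r) (hrn : r < n) :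
    a % n = r :=
  ((Int.ediv_emod_unique (hr.trans_lt hrn)).mpr ⟨h.symm, hr, hrn⟩).2

theorem stmt_12_general {V : Type*} (k : ℕ) (hk : 2 ≤ k)
    (G : SimpleGraph V)
    (hgirth : ∀ (v : V) (w : G.Walk v v), w.IsCycle → Odd w.length → 2 * k + 1 ≤ w.length)
    (v : V) (c : G.Walk v v) (hc : c.IsCycle) (hlen : c.length = 2 * k + 1)
    (x : V) (hx : x ∉ c.support) :
    Set.ncard {i : Fin (2 * k + 1) | G.Adj x (c.getVert i)} ≤ 2 ∧
      ∀ i j : Fin (2 * k + 1), i ≠ j →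
        G.Adj x (c.getVert i) → G.Adj x (c.getVert j) →
        ((i : ℤ) - (j : ℤ)) % (2 * k + 1) = 2 ∨
        ((i : ℤ) - (j : ℤ)) % (2 * k + 1) = 2 * k - 1 := by
  have gap : ∀ i j : Fin (2 * k + 1), i ≠ j →
      G.Adj x (c.getVert i) → G.Adj x (c.getVert j) →
      (i : ℕ) + 2 = j ∨ (j : ℕ) + 2 = i ∨
        (i : ℕ) + (2 * k - 1) = j ∨ (j : ℕ) + (2 * k - 1) = i := by
    have hodd : Odd c.length := hlen ▸ odd_two_mul_add_one k
    have hgirth' : ∀ (u : V) (w : G.Walk u u), w.IsCycle → Odd w.length →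
        c.length ≤ w.length := by
      rwa [hlen]
    intro i j hij hi hj
    rcases Nat.lt_or_gt_of_ne (Fin.val_ne_of_ne hij) with h | h
    · have := hc.sub_eq_two_or_sub_eq_length_sub_two_of_adj hodd hgirth' hx h (by omega)
        hi hj
      omega
    · have := hc.sub_eq_two_or_sub_eq_length_sub_two_of_adj hodd hgirth' hx h (by omega)
        hj hi
      omega
  refine ⟨?_, fun i j hij hi hj => ?_⟩
  · by_contra! h
    obtain ⟨a, b, e, ha, hb, he, hab, hae, hbe⟩ := (Set.two_lt_ncard_iff).mp h
    have := gap a b hab ha hb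
    have := gap a e hae ha he
    have := gap b e hbe hb he
    omega
  · rcases gap i j hij hi hj with h | h | h | h
    · exact Or.inr (Int.emod_eq_of_eq_add_mul (q := -1) (by omega) (by omega) (by omega))
    · exact Or.inl (Int.emod_eq_of_eq_add_mul (q := 0) (by omega) (by omega) (by omega))
    · exact Or.inl (Int.emod_eq_of_eq_add_mul (q := -1) (by omega) (by omega) (by omega))
    · exact Or.inr (Int.emod_eq_of_eq_add_mul (q := 0) (by omega) (by omega) (by omega))

theorem stmt_12 {V : Type*} [DecidableEq V] (k : ℕ) (hk : 2 ≤ k)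
    (G : SimpleGraph V)
    (hgirth : ∀ (v : V) (w : G.Walk v v), w.IsCycle → Odd w.length → 2 * k + 1 ≤ w.length)
    (v : V) (c : G.Walk v v) (hc : c.IsCycle) (hlen : c.length = 2 * k + 1)
    (x : V) (hx : x ∉ c.support) :
    Set.ncard {i : Fin (2 * k + 1) | G.Adj x (c.getVert i)} ≤ 2 ∧
      ∀ i j : Fin (2 * k + 1), i ≠ j →
        G.Adj x (c.getVert i) → G.Adj x (c.getVert j) →
        ((i : ℤ) - (j : ℤ)) % (2 * k + 1) = 2 ∨
        ((i : ℤ) - (j : ℤ)) % (2 * k + 1) = 2 * k - 1 :=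
  stmt_12_general k hk G hgirth v c hc hlen x hx
end

section
/- For every integer k ≥ 2, the Möbius ladder M_{4k} is not homomorphic to the cycle C_{2k+1} of length 2k+1. -/
/-!
Compose a homomorphism `M_{4k} → C_{2k+1}` with the Hamiltonian cycle `0, 1, …, 4k - 1` and lift
the resulting closed walk in `ZMod (2k+1)` to an integer walk `h` with steps `±1`. A diagonal
`i ~ i + 2k` forces `d = h (i + 2k) - h i ≡ ±1 (mod 2k+1)`; as `d` is even with `|d| ≤ 2k`, this
leaves only `d = ±2k`. Two consecutive windows differ by at most `2`, so `d` is the same for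
every `i`, and the walk closes up with total displacement `±4k`, which `2k + 1` does not divide.
-/

/-- The Möbius ladder `M_{4k}`: the cycle of length `4k` on `ZMod (4k)` together with
all diagonals, i.e. chords joining vertices at distance `2k` along the cycle. -/
def mobiusLadder (k : ℕ) : SimpleGraph (ZMod (4 * k)) :=
  SimpleGraph.fromRel fun i j => i - j = 1 ∨ i - j = (2 * k : ℕ)

open SimpleGraph

/- `ZMod (n + 1)` is definitionally `Fin (n + 1)`, so vertices of `cycleGraph (n + 1)` can be read
in `ZMod (n + 1)`, where integer casts and divisibility are available. -/
lemma SimpleGraph.sub_eq_one_or_neg_one_of_cycleGraph_adj {n : ℕ} {u v : ZMod (n + 1)}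
    (h : (cycleGraph (n + 1)).Adj u v) : v - u = 1 ∨ v - u = -1 := by
  rcases n with _ | n
  · exact (cycleGraph_one_adj h).elim
  · rcases cycleGraph_adj.mp h with h | h
    · exact Or.inr (by rw [← neg_sub]; exact congrArg Neg.neg h)
    · exact Or.inl h

lemma mobiusLadder_adj_add_one (k : ℕ) (i : ZMod (4 * k)) : (mobiusLadder k).Adj i (i + 1) := by
  have h1 : (1 : ZMod (4 * k)) ≠ 0 := by
    rw [← Nat.cast_one, Ne, ZMod.natCast_eq_zero_iff, Nat.dvd_one]
    omega
  simp only [mobiusLadder, fromRel_adj]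
  exact ⟨by simpa using h1, Or.inr (Or.inl (by ring))⟩

lemma mobiusLadder_adj_add_two_mul {k : ℕ} (hk : 1 ≤ k) (i : ZMod (4 * k)) :
    (mobiusLadder k).Adj i (i + (2 * k : ℕ)) := by
  have h2k : ((2 * k : ℕ) : ZMod (4 * k)) ≠ 0 := by
    rw [Ne, ZMod.natCast_eq_zero_iff]
    exact fun h => by have := Nat.le_of_dvd (by omega) h; omega
  simp only [mobiusLadder, fromRel_adj]
  exact ⟨by simpa using h2k, Or.inr (Or.inr (by ring))⟩

lemma exists_int_lift_of_sub_eq_one_or_neg_one {m : ℕ} (f : ℕ → ZMod m)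
    (hf : ∀ j, f (j + 1) - f j = 1 ∨ f (j + 1) - f j = -1) :
    ∃ h : ℕ → ℤ, (∀ j, (h (j + 1) - h j).natAbs = 1) ∧ ∀ j, (h j : ZMod m) = f j - f 0 := by
  have : ∀ j, ∃ e : ℤ, e.natAbs = 1 ∧ (e : ZMod m) = f (j + 1) - f j := fun j =>
    (hf j).elim (fun h => ⟨1, rfl, by simp [h]⟩) (fun h => ⟨-1, rfl, by simp [h]⟩)
  choose e he hfe using this
  refine ⟨fun j => ∑ i ∈ Finset.range j, e i, fun j => by simpa [Finset.sum_range_succ] using he j,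
    fun j => ?_⟩
  induction j with
  | zero => simp
  | succ j ih =>
    push_cast [Finset.sum_range_succ] at ih ⊢
    rw [ih, hfe]
    ring

section UnitSteps

variable {h : ℕ → ℤ}

lemma natAbs_sub_le_of_natAbs_step_eq_one (hh : ∀ j, (h (j + 1) - h j).natAbs = 1) (i n : ℕ) :
    (h (i + n) - h i).natAbs ≤ n := by
  induction n with
  | zero => simp
  | succ n ih => have := hh (i + n); rw [← add_assoc]; omega

lemma even_sub_add_of_natAbs_step_eq_one (hh : ∀ j, (h (j + 1) - h j).natAbs = 1) (i n : ℕ) :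
    Even (h (i + n) - h i + n) := by
  induction n with
  | zero => simp
  | succ n ih =>
    have := hh (i + n)
    rw [Int.even_iff] at ih
    rw [← add_assoc, Int.even_iff]
    push_cast
    omega

lemma sub_eq_of_natAbs_window_eq (hh : ∀ j, (h (j + 1) - h j).natAbs = 1) {n : ℕ} (hn : 2 ≤ n)
    (hwin : ∀ i, (h (i + n) - h i).natAbs = n) (i : ℕ) : h (i + n) - h i = h n - h 0 := by
  -- consecutive windows differ by at most `2 < 2 * n`, so the sign of a window never flips
  induction i with
  | zero => simp
  | succ i ih =>
    have := hh i
    have := hh (i + n)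
    have := hwin i
    have := hwin (i + 1)
    rw [add_right_comm] at this ⊢
    omega

end UnitSteps

lemma natAbs_eq_of_intCast_eq_one_or_neg_one {k : ℕ} {d : ℤ} (hd : d.natAbs ≤ 2 * k)
    (heven : Even d) (hcast : (d : ZMod (2 * k + 1)) = 1 ∨ (d : ZMod (2 * k + 1)) = -1) :
    d.natAbs = 2 * k := by
  obtain ⟨e, he, hdvd⟩ : ∃ e : ℤ, e.natAbs = 1 ∧ ((2 * k + 1 : ℕ) : ℤ) ∣ d - e := by
    rcases hcast with h | h
    · exact ⟨1, rfl, (ZMod.intCast_eq_intCast_iff_dvd_sub _ _ _).mp (by simpa using h.symm)⟩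
    · exact ⟨-1, rfl, (ZMod.intCast_eq_intCast_iff_dvd_sub _ _ _).mp (by simpa using h.symm)⟩
  have hne : d - e ≠ 0 := by
    rw [Int.even_iff] at heven
    omega
  have := Int.natAbs_le_of_dvd_ne_zero hdvd hne
  rw [Int.natAbs_natCast] at this
  omega

theorem apply_four_mul_ne_apply_zero {k : ℕ} (hk : 1 ≤ k) (f : ℕ → ZMod (2 * k + 1))
    (hstep : ∀ j, f (j + 1) - f j = 1 ∨ f (j + 1) - f j = -1)
    (hdiag : ∀ j, f (j + 2 * k) - f j = 1 ∨ f (j + 2 * k) - f j = -1) :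
    f (4 * k) ≠ f 0 := by
  obtain ⟨h, hh, hcast⟩ := exists_int_lift_of_sub_eq_one_or_neg_one f hstep
  have hcast_sub : ∀ i n, ((h (i + n) - h i : ℤ) : ZMod (2 * k + 1)) = f (i + n) - f i := by
    intro i n
    push_cast [hcast]
    ring
  have hwin : ∀ i, (h (i + 2 * k) - h i).natAbs = 2 * k := fun i =>
    natAbs_eq_of_intCast_eq_one_or_neg_one (natAbs_sub_le_of_natAbs_step_eq_one hh i _)
      ((Int.even_add.mp (even_sub_add_of_natAbs_step_eq_one hh i (2 * k))).mpr
        ⟨k, by push_cast; ring⟩)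
      (by rw [hcast_sub]; exact hdiag i)
  have hconst := sub_eq_of_natAbs_window_eq hh (by omega) hwin
  intro hper
  have hdvd : ((2 * k + 1 : ℕ) : ℤ) ∣ h (0 + 4 * k) - h 0 := by
    rw [← ZMod.intCast_zmod_eq_zero_iff_dvd, hcast_sub, zero_add, hper, sub_self]
  have hfull : (h (0 + 4 * k) - h 0).natAbs = 4 * k := by
    have := hconst (2 * k)
    have := hwin 0
    rw [zero_add] at this
    rw [show 0 + 4 * k = 2 * k + 2 * k by ring]
    omega
  have h4k := Int.natAbs_dvd_natAbs.mpr hdvd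
  rw [Int.natAbs_natCast, hfull] at h4k
  have h2 : 2 * k + 1 ∣ 2 := (Nat.dvd_add_right h4k).mp ⟨2, by ring⟩
  have := Nat.le_of_dvd two_pos h2
  omega

theorem stmt_14 (k : ℕ) (hk : 2 ≤ k) :
    ¬ Nonempty (mobiusLadder k →g SimpleGraph.cycleGraph (2 * k + 1)) := by
  rintro ⟨φ⟩
  let f : ℕ → ZMod (2 * k + 1) := fun j => φ (j : ZMod (4 * k))
  refine apply_four_mul_ne_apply_zero (by omega) f (fun j => ?_) (fun j => ?_) ?_
  · have := φ.map_adj (mobiusLadder_adj_add_one k j)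
    simpa [f] using sub_eq_one_or_neg_one_of_cycleGraph_adj this
  · have := φ.map_adj (mobiusLadder_adj_add_two_mul (by omega) (j : ZMod (4 * k)))
    simpa [f] using sub_eq_one_or_neg_one_of_cycleGraph_adj this
  · exact congrArg φ ((ZMod.natCast_self _).trans Nat.cast_zero.symm)
end
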